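/- arXiv:1509.01922 — 8 statements merged into one kernel-verified Lean document; each statement's English description precedes it below -/
import Mathlib

section
/- Let B be a Banach algebra, ω: B → ℂ a continuous character, Φ: B → L(E) a bounded anti-representation on a Banach space E, and Ξ: B^ω → E* a bounded linear map on the kernel B^ω = ker ω which is a left B^ω-module map, i.e., Ξ(ab) = Φ̌(a)(Ξ(b)) for all a, b ∈ B^ω. If B^ω possesses a bounded right approximate identity {b_j}, i.e., a norm-bounded net with ‖a b_j − a‖ → 0 for every a ∈ B^ω, then there exists φ₀ ∈ E* with Ξ(a) = Φ̌(a)(φ₀) for all a ∈ B^ω. -/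
open Filter Topology

/-! Banach–Alaoglu gives a weak-* cluster point `φ₀` of the bounded net `Ξ (b j)`. For `a ∈ B^ω`
the module property turns `Ξ (b j) (Φ a x)` into `Ξ (a * b j) x`, which converges to `Ξ a x`
because `a * b j → a`; a convergent net has its limit as its only cluster point, so
`Ξ a x = φ₀ (Φ a x)`. -/

theorem StrongDual.exists_forall_mapClusterPt_apply_of_norm_le {𝕜 E ι : Type*}
    [NontriviallyNormedField 𝕜] [ProperSpace 𝕜] [SeminormedAddCommGroup E] [NormedSpace 𝕜 E]
    {l : Filter ι} [l.NeBot] {f : ι → StrongDual 𝕜 E} {C : ℝ} (hf : ∀ i, ‖f i‖ ≤ C) :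
    ∃ φ : StrongDual 𝕜 E, ∀ x, MapClusterPt (φ x) l (fun i => f i x) := by
  have hball : ∀ i, toWeakDual (f i) ∈ WeakDual.toStrongDual ⁻¹' Metric.closedBall 0 C := by
    simpa using hf
  obtain ⟨φ, -, hφ⟩ := (WeakDual.isCompact_closedBall (0 : StrongDual 𝕜 E) C).exists_mapClusterPt
    (f := l) (le_principal_iff.mpr (mem_map.mpr (Eventually.of_forall hball)))
  exact ⟨WeakDual.toStrongDual φ, fun x =>
    hφ.continuousAt_comp (WeakBilin.eval_continuous _ x).continuousAt⟩

theorem stmt1_general {B E ι : Type*} [NormedRing B] [NormedAlgebra ℂ B]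
    [NormedAddCommGroup E] [NormedSpace ℂ E]
    [Nonempty ι] [SemilatticeSup ι]
    (ω : B →L[ℂ] ℂ)
    (Φ : B →ₗ[ℂ] (E →L[ℂ] E))
    (Ξ : B →ₗ[ℂ] (E →L[ℂ] ℂ)) (CΞ : ℝ) (hΞb : ∀ a : B, ‖Ξ a‖ ≤ CΞ * ‖a‖)
    (hΞmod : ∀ a ∈ LinearMap.ker (ω : B →ₗ[ℂ] ℂ), ∀ b ∈ LinearMap.ker (ω : B →ₗ[ℂ] ℂ), Ξ (a * b) = (Ξ b).comp (Φ a))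
    (bj : ι → B) (hbmem : ∀ j, bj j ∈ LinearMap.ker (ω : B →ₗ[ℂ] ℂ))
    (Cb : ℝ) (hbb : ∀ j, ‖bj j‖ ≤ Cb)
    (hbai : ∀ a ∈ LinearMap.ker (ω : B →ₗ[ℂ] ℂ),
      Tendsto (fun j => ‖a * bj j - a‖) atTop (nhds 0)) :
    ∃ φ₀ : E →L[ℂ] ℂ, ∀ a ∈ LinearMap.ker (ω : B →ₗ[ℂ] ℂ), Ξ a = φ₀.comp (Φ a) := by
  have hΞbj : ∀ j, ‖Ξ (bj j)‖ ≤ |CΞ| * Cb := fun j =>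
    calc ‖Ξ (bj j)‖ ≤ CΞ * ‖bj j‖ := hΞb _
      _ ≤ |CΞ| * ‖bj j‖ := by gcongr; exact le_abs_self CΞ
      _ ≤ |CΞ| * Cb := by gcongr; exact hbb j
  obtain ⟨φ₀, hφ₀⟩ :=
    StrongDual.exists_forall_mapClusterPt_apply_of_norm_le (l := atTop) hΞbj
  refine ⟨φ₀, fun a ha => ContinuousLinearMap.ext fun x => ?_⟩
  have hΞ_cont : Continuous Ξ := (Ξ.mkContinuous CΞ hΞb).continuous
  have hlim : Tendsto (fun j => Ξ (a * bj j)) atTop (𝓝 (Ξ a)) :=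
    (hΞ_cont.tendsto a).comp (tendsto_iff_norm_sub_tendsto_zero.mpr (hbai a ha))
  have hlim_x : Tendsto (fun j => Ξ (bj j) (Φ a x)) atTop (𝓝 (Ξ a x)) := by
    simpa only [Function.comp_def, hΞmod a ha _ (hbmem _), ContinuousLinearMap.comp_apply] using
      ((continuous_eval_const x).tendsto _).comp hlim
  exact (eq_of_nhds_neBot ((hφ₀ (Φ a x)).clusterPt.mono hlim_x)).symm

/-- If the kernel `B^ω` of a continuous character on a Banach algebra has a
bounded right approximate identity, then every bounded left `B^ω`-module map
`Ξ : B^ω → E*` (w.r.t. a bounded anti-representation `Φ`) is of the form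
`Ξ a = Φ̌(a) φ₀` for some `φ₀ ∈ E*`. -/
theorem stmt1 {B E ι : Type*} [NormedRing B] [NormedAlgebra ℂ B]
    [NormedAddCommGroup E] [NormedSpace ℂ E] [CompleteSpace E]
    [Nonempty ι] [SemilatticeSup ι]
    (ω : B →L[ℂ] ℂ) (hωm : ∀ a b : B, ω (a * b) = ω a * ω b) (hω0 : ω ≠ 0)
    (Φ : B →ₗ[ℂ] (E →L[ℂ] E)) (hΦanti : ∀ a b : B, Φ (a * b) = (Φ b).comp (Φ a))
    (CΦ : ℝ) (hΦb : ∀ a : B, ‖Φ a‖ ≤ CΦ * ‖a‖)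
    (Ξ : B →ₗ[ℂ] (E →L[ℂ] ℂ)) (CΞ : ℝ) (hΞb : ∀ a : B, ‖Ξ a‖ ≤ CΞ * ‖a‖)
    (hΞmod : ∀ a ∈ LinearMap.ker (ω : B →ₗ[ℂ] ℂ), ∀ b ∈ LinearMap.ker (ω : B →ₗ[ℂ] ℂ), Ξ (a * b) = (Ξ b).comp (Φ a))
    (bj : ι → B) (hbmem : ∀ j, bj j ∈ LinearMap.ker (ω : B →ₗ[ℂ] ℂ))
    (Cb : ℝ) (hbb : ∀ j, ‖bj j‖ ≤ Cb)
    (hbai : ∀ a ∈ LinearMap.ker (ω : B →ₗ[ℂ] ℂ),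
      Tendsto (fun j => ‖a * bj j - a‖) atTop (nhds 0)) :
    ∃ φ₀ : E →L[ℂ] ℂ, ∀ a ∈ LinearMap.ker (ω : B →ₗ[ℂ] ℂ), Ξ a = φ₀.comp (Φ a) :=
  stmt1_general ω Φ Ξ CΞ hΞb hΞmod bj hbmem Cb hbb hbai
end

section
/- Let B be a Banach algebra and ω: B → ℂ a continuous character. If the kernel ker ω has a bounded left approximate identity {e_i} (a norm-bounded net with ‖e_i x − x‖ → 0 for every x ∈ ker ω), then B itself has a bounded left approximate identity. Similarly for right approximate identities. -/
open Filter Topology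

/-!
Pick `u` with `ω u = 1`. Then `x - u * x` lies in `ker ω` for every `x`, and
`(e - e * u + u) * x - x = e * (x - u * x) - (x - u * x)`, so the bounded net
`e i - e i * u + u` is a left approximate identity of the whole algebra as soon as `e`
is one for `ker ω`. The right case is symmetric, with `e i - u * e i + u`.
-/

section ApproximateIdentity

variable {B ι : Type*} [NonUnitalNormedRing B] {l : Filter ι}

theorem norm_sub_mul_add_le_of_norm_le {a u : B} {C : ℝ} (ha : ‖a‖ ≤ C) :
    ‖a - a * u + u‖ ≤ C + C * ‖u‖ + ‖u‖ :=
  calc ‖a - a * u + u‖ ≤ ‖a‖ + ‖a * u‖ + ‖u‖ := norm_add_le_of_le (norm_sub_le _ _) le_rfl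
    _ ≤ C + C * ‖u‖ + ‖u‖ := by
      gcongr
      exact (norm_mul_le _ _).trans (by gcongr)

theorem norm_sub_mul_add_le_of_norm_le' {a u : B} {C : ℝ} (ha : ‖a‖ ≤ C) :
    ‖a - u * a + u‖ ≤ C + ‖u‖ * C + ‖u‖ :=
  calc ‖a - u * a + u‖ ≤ ‖a‖ + ‖u * a‖ + ‖u‖ := norm_add_le_of_le (norm_sub_le _ _) le_rfl
    _ ≤ C + ‖u‖ * C + ‖u‖ := by
      gcongr
      exact (norm_mul_le _ _).trans (by gcongr)

theorem tendsto_norm_sub_mul_add_mul_sub {e : ι → B} (u x : B)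
    (h : Tendsto (fun i => ‖e i * (x - u * x) - (x - u * x)‖) l (𝓝 0)) :
    Tendsto (fun i => ‖(e i - e i * u + u) * x - x‖) l (𝓝 0) := by
  have key : ∀ a : B, (a - a * u + u) * x - x = a * (x - u * x) - (x - u * x) := by
    intro a; noncomm_ring
  simpa only [key] using h

theorem tendsto_norm_mul_sub_mul_add_sub {e : ι → B} (u x : B)
    (h : Tendsto (fun i => ‖(x - x * u) * e i - (x - x * u)‖) l (𝓝 0)) :
    Tendsto (fun i => ‖x * (e i - u * e i + u) - x‖) l (𝓝 0) := by
  have key : ∀ a : B, x * (a - u * a + u) - x = (x - x * u) * a - (x - x * u) := by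
    intro a; noncomm_ring
  simpa only [key] using h

end ApproximateIdentity

section Character

variable {𝕜 B : Type*} [Field 𝕜] [NonUnitalRing B] [Module 𝕜 B] {ω : B →ₗ[𝕜] 𝕜}

theorem sub_mul_mem_ker_of_apply_eq_one (hωm : ∀ a b : B, ω (a * b) = ω a * ω b) {u : B}
    (hu : ω u = 1) (x : B) : x - u * x ∈ LinearMap.ker ω := by
  simp [LinearMap.mem_ker, hωm, hu]

theorem sub_mul_mem_ker_of_apply_eq_one' (hωm : ∀ a b : B, ω (a * b) = ω a * ω b) {u : B}
    (hu : ω u = 1) (x : B) : x - x * u ∈ LinearMap.ker ω := by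
  simp [LinearMap.mem_ker, hωm, hu]

end Character

/-- If the kernel of a continuous character `ω` on a Banach algebra `B` has a
bounded left (resp. right) approximate identity, then `B` itself has a bounded left
(resp. right) approximate identity. -/
theorem stmt2 {B : Type*} [NormedRing B] [NormedAlgebra ℂ B]
    (ω : B →L[ℂ] ℂ) (hωm : ∀ a b : B, ω (a * b) = ω a * ω b) (hω0 : ω ≠ 0) :
    (∀ (ι : Type) [Nonempty ι] [SemilatticeSup ι] (e : ι → B) (C : ℝ),
        (∀ i, ‖e i‖ ≤ C) → (∀ i, e i ∈ LinearMap.ker (ω : B →ₗ[ℂ] ℂ)) →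
        (∀ x ∈ LinearMap.ker (ω : B →ₗ[ℂ] ℂ), Tendsto (fun i => ‖e i * x - x‖) atTop (nhds 0)) →
        ∃ (f : ι → B) (C' : ℝ), (∀ i, ‖f i‖ ≤ C') ∧
          ∀ x : B, Tendsto (fun i => ‖f i * x - x‖) atTop (nhds 0)) ∧
    (∀ (ι : Type) [Nonempty ι] [SemilatticeSup ι] (e : ι → B) (C : ℝ),
        (∀ i, ‖e i‖ ≤ C) → (∀ i, e i ∈ LinearMap.ker (ω : B →ₗ[ℂ] ℂ)) →
        (∀ x ∈ LinearMap.ker (ω : B →ₗ[ℂ] ℂ), Tendsto (fun i => ‖x * e i - x‖) atTop (nhds 0)) →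
        ∃ (f : ι → B) (C' : ℝ), (∀ i, ‖f i‖ ≤ C') ∧
          ∀ x : B, Tendsto (fun i => ‖x * f i - x‖) atTop (nhds 0)) := by
  obtain ⟨u, hu⟩ : ∃ u, ω u = 1 :=
    LinearMap.surjective (f := (ω : B →ₗ[ℂ] ℂ)) (by exact_mod_cast hω0) 1
  constructor
  · intro ι _ _ e C hC _ hlim
    exact ⟨fun i => e i - e i * u + u, C + C * ‖u‖ + ‖u‖,
      fun i => norm_sub_mul_add_le_of_norm_le (hC i), fun x =>
        tendsto_norm_sub_mul_add_mul_sub u x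
          (hlim _ (sub_mul_mem_ker_of_apply_eq_one hωm hu x))⟩
  · intro ι _ _ e C hC _ hlim
    exact ⟨fun i => e i - u * e i + u, C + ‖u‖ * C + ‖u‖,
      fun i => norm_sub_mul_add_le_of_norm_le' (hC i), fun x =>
        tendsto_norm_mul_sub_mul_add_sub u x
          (hlim _ (sub_mul_mem_ker_of_apply_eq_one' hωm hu x))⟩
end

section
/- Let G be a locally compact group, E a Banach space, and Ψ: C_c(G) → L(E) a non-degenerate, locally bounded representation of the convolution algebra C_c(G) (i.e., for every compact K ⊆ G the restriction of Ψ to continuous functions supported in K is bounded with respect to the L¹-norm, and span Ψ(C_c(G))E is dense in E). Then there exists a unique norm-continuous representation μ: G → L(E) such that Ψ(f)x = ∫_G f(t) μ_t(x) dt for all f ∈ C_c(G) and x ∈ E. -/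
/-!
Let `(e_i)` be an approximate identity in `C_c(G)`. For `f ∈ C_c(G)` we have
`Ψ(λ_t e_i) Ψ(f) = Ψ(λ_t (e_i * f))`, and `e_i * f → f` uniformly with supports in a fixed compact
set, so local boundedness gives `Ψ(λ_t e_i) Ψ(f) → Ψ(λ_t f)` in norm. The operators `Ψ(λ_t e_i)`
are uniformly bounded, hence by non-degeneracy they converge strongly to an operator `π_t` with
`π_t Ψ(f) = Ψ(λ_t f)`. On the dense span of the vectors `Ψ(f) x` this identity gives
multiplicativity, strong continuity (as `t ↦ λ_t f` is uniformly continuous) and uniqueness.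
The integral formula reduces to `Ψ(f * g) = ∫ f(t) Ψ(λ_t g) dt`: on functions supported in a fixed
compact set `Ψ` is continuous for the sup norm, and `f * g` is the Bochner integral of
`t ↦ f(t) λ_t g` in the space of bounded continuous functions.
-/

open Filter Topology MeasureTheory Set Function Pointwise BoundedContinuousFunction

section LeftTranslate

variable {G : Type*} [Group G]

def leftTranslate {β : Type*} (t : G) (f : G → β) : G → β := fun s => f (t⁻¹ * s)

variable {β : Type*}

@[simp]
lemma leftTranslate_apply (t : G) (f : G → β) (s : G) : leftTranslate t f s = f (t⁻¹ * s) := rfl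

@[simp]
lemma leftTranslate_one (f : G → β) : leftTranslate 1 f = f := by
  ext; simp

lemma leftTranslate_leftTranslate (s t : G) (f : G → β) :
    leftTranslate s (leftTranslate t f) = leftTranslate (s * t) f := by
  ext; simp [mul_assoc]

lemma support_leftTranslate [Zero β] (t : G) (f : G → β) :
    support (leftTranslate t f) = t • support f := by
  ext s; simp [mem_smul_set_iff_inv_smul_mem]

lemma support_leftTranslate_subset [Zero β] {f : G → β} {t : G} {N K : Set G} (ht : t ∈ N)
    (hf : support f ⊆ K) : support (leftTranslate t f) ⊆ N * K := by
  rw [support_leftTranslate]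
  rintro _ ⟨s, hs, rfl⟩
  exact mul_mem_mul ht (hf hs)

variable [TopologicalSpace G] [IsTopologicalGroup G]

lemma Continuous.leftTranslate [TopologicalSpace β] {f : G → β} (hf : Continuous f) (t : G) :
    Continuous (leftTranslate t f) :=
  hf.comp (continuous_const.mul continuous_id)

lemma tsupport_leftTranslate [Zero β] (t : G) (f : G → β) :
    tsupport (leftTranslate t f) = t • tsupport f := by
  rw [tsupport, support_leftTranslate, closure_smul]; rfl

lemma HasCompactSupport.leftTranslate [Zero β] {f : G → β} (hf : HasCompactSupport f) (t : G) :
    HasCompactSupport (leftTranslate t f) := by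
  rw [HasCompactSupport, tsupport_leftTranslate, ← image_smul]
  exact hf.image (continuous_const_smul t)

lemma tendstoUniformly_leftTranslate [UniformSpace β] [Zero β] {f : G → β}
    (hfc : HasCompactSupport f) (hf : Continuous f) (t₀ : G) :
    TendstoUniformly (fun t => leftTranslate t f) (leftTranslate t₀ f) (𝓝 t₀) := by
  let := IsTopologicalGroup.rightUniformSpace G
  have hu := hfc.uniformContinuous_of_continuous hf
  intro r hr
  obtain ⟨U, hU, hUr⟩ := mem_comap.1 (hu hr)
  have hlim : Tendsto (fun t => t⁻¹ * t₀) (𝓝 t₀) (𝓝 1) := by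
    have : Continuous fun t : G => t⁻¹ * t₀ := by fun_prop
    simpa using this.tendsto t₀
  filter_upwards [hlim hU] with t ht v
  exact @hUr (t₀⁻¹ * v, t⁻¹ * v) (by simpa [mul_assoc] using ht)

end LeftTranslate

section Convolution

variable {G : Type*} [Group G] [MeasurableSpace G] (μ : Measure G)

noncomputable def mulConv (f g : G → ℂ) : G → ℂ := fun t => ∫ s, f s * g (s⁻¹ * t) ∂μ

lemma support_mulConv_subset (f g : G → ℂ) :
    support (mulConv μ f g) ⊆ support f * support g := by
  intro u hu
  obtain ⟨s, hs⟩ : ∃ s, f s * g (s⁻¹ * u) ≠ 0 := by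
    by_contra! h
    exact hu (by simp [mulConv, h])
  exact ⟨s, left_ne_zero_of_mul hs, s⁻¹ * u, right_ne_zero_of_mul hs, by group⟩

lemma mulConv_leftTranslate [MeasurableMul G] [μ.IsMulLeftInvariant] (t : G) (f g : G → ℂ) :
    mulConv μ (leftTranslate t f) g = leftTranslate t (mulConv μ f g) := by
  ext u
  simp only [mulConv, leftTranslate_apply]
  rw [← integral_mul_left_eq_self _ t]
  simp [mul_assoc]

variable [TopologicalSpace G] [IsTopologicalGroup G]

lemma HasCompactSupport.mulConv {f g : G → ℂ} (hf : HasCompactSupport f)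
    (hg : HasCompactSupport g) : HasCompactSupport (mulConv μ f g) :=
  .of_support_subset_isCompact (hf.mul hg)
    ((support_mulConv_subset μ f g).trans (mul_subset_mul (subset_tsupport f) (subset_tsupport g)))

variable [OpensMeasurableSpace G] [IsFiniteMeasureOnCompacts μ]

lemma integrable_mul_leftTranslate {f g : G → ℂ} (hf : Continuous f) (hfc : HasCompactSupport f)
    (hg : Continuous g) (u : G) : Integrable (fun s => f s * g (s⁻¹ * u)) μ :=
  (hf.mul (hg.comp (by fun_prop))).integrable_of_hasCompactSupport hfc.mul_right

lemma norm_mulConv_sub_le {e g : G → ℂ} (he : Continuous e) (hec : HasCompactSupport e)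
    (hg : Continuous g) (he1 : ∫ s, e s ∂μ = 1) {ε : ℝ} {u : G}
    (hb : ∀ s ∈ support e, ‖g (s⁻¹ * u) - g u‖ ≤ ε) :
    ‖mulConv μ e g u - g u‖ ≤ ε * ∫ s, ‖e s‖ ∂μ := by
  have hsplit : mulConv μ e g u - g u = ∫ s, e s * (g (s⁻¹ * u) - g u) ∂μ := by
    simp_rw [mul_sub]
    rw [integral_sub (integrable_mul_leftTranslate μ he hec hg u)
      ((he.integrable_of_hasCompactSupport hec).mul_const _), integral_mul_const, he1, one_mul]
    rfl
  rw [hsplit, ← integral_const_mul]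
  refine norm_integral_le_of_norm_le
    ((he.norm.integrable_of_hasCompactSupport hec.norm).const_mul ε) (.of_forall fun s => ?_)
  by_cases hs : e s = 0
  · simp [hs]
  · rw [norm_mul, mul_comm ε]
    exact mul_le_mul_of_nonneg_left (hb s hs) (norm_nonneg _)

lemma exists_integral_bcf_eq_mulConv {f g : G → ℂ} (hf : Continuous f) (hfc : HasCompactSupport f)
    (hg : Continuous g) (hgc : HasCompactSupport g) :
    ∃ ξ : G → G →ᵇ ℂ, Integrable ξ μ ∧ (∀ t, ⇑(ξ t) = f t • leftTranslate t g) ∧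
      ⇑(∫ t, ξ t ∂μ) = mulConv μ f g := by
  let gb : G →ᵇ ℂ :=
    (⟨⟨g, hg⟩, hgc⟩ : CompactlySupportedContinuousMap G ℂ).toBoundedContinuousFunction
  let τ : G → G →ᵇ ℂ := fun t => gb.compContinuous ⟨fun s => t⁻¹ * s, by fun_prop⟩
  have hτ : Continuous τ := continuous_iff_continuousAt.2 fun t₀ =>
    tendsto_iff_tendstoUniformly.2 (tendstoUniformly_leftTranslate hgc hg t₀)
  have hξ : Integrable (fun t => f t • τ t) μ :=
    (hf.smul hτ).integrable_of_hasCompactSupport hfc.smul_right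
  refine ⟨fun t => f t • τ t, hξ, fun t => rfl, funext fun u => ?_⟩
  calc (∫ t, f t • τ t ∂μ) u = evalCLM ℂ u (∫ t, f t • τ t ∂μ) := rfl
    _ = ∫ t, evalCLM ℂ u (f t • τ t) ∂μ :=
      ((evalCLM ℂ u).integral_comp_comm hξ).symm
    _ = mulConv μ f g u := rfl

lemma Continuous.mulConv {f g : G → ℂ} (hf : Continuous f) (hfc : HasCompactSupport f)
    (hg : Continuous g) (hgc : HasCompactSupport g) : Continuous (mulConv μ f g) := by
  obtain ⟨ξ, -, -, hξ⟩ := exists_integral_bcf_eq_mulConv μ hf hfc hg hgc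
  exact hξ ▸ (∫ t, ξ t ∂μ).continuous

end Convolution

section ApproxIdentity

variable {G : Type*} [Group G] [TopologicalSpace G] [MeasurableSpace G] (μ : Measure G)

/-- A complex-valued approximate identity, normalised by `∫ e i = 1` and `∫ ‖e i‖ ≤ 1` in place
of positivity. -/
structure IsApproxIdentity {ι : Type*} (l : Filter ι) (e : ι → G → ℂ) : Prop where
  continuous : ∀ i, Continuous (e i)
  hasCompactSupport : ∀ i, HasCompactSupport (e i)
  integral_eq_one : ∀ i, ∫ s, e i s ∂μ = 1
  integral_norm_le_one : ∀ i, ∫ s, ‖e i s‖ ∂μ ≤ 1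
  tendsto_tsupport : Tendsto (fun i => tsupport (e i)) l (𝓝 1).smallSets

variable [IsTopologicalGroup G] [OpensMeasurableSpace G]
  [IsFiniteMeasureOnCompacts μ]

lemma exists_bump_integral_eq_one [LocallyCompactSpace G] [μ.IsOpenPosMeasure] {V : Set G}
    (hV : V ∈ 𝓝 1) :
    ∃ e : G → ℂ, Continuous e ∧ HasCompactSupport e ∧ tsupport e ⊆ V ∧
      ∫ s, e s ∂μ = 1 ∧ ∫ s, ‖e s‖ ∂μ = 1 := by
  obtain ⟨φ, hφ1, hφc, hφV, hφI⟩ := exists_continuousMap_one_of_isCompact_subset_isOpen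
    isCompact_singleton isOpen_interior (singleton_subset_iff.2 (mem_interior_iff_mem_nhds.2 hV))
  have hpos : 0 < ∫ s, φ s ∂μ :=
    integral_pos_of_integrable_nonneg_nonzero (x := 1) φ.continuous
      (φ.continuous.integrable_of_hasCompactSupport hφc) (fun s => (hφI s).1)
      (by simp [hφ1 (mem_singleton 1)])
  set c := ∫ s, φ s ∂μ
  have hφ : HasCompactSupport fun s => c⁻¹ * φ s :=
    HasCompactSupport.mul_left (f := fun _ => c⁻¹) hφc
  refine ⟨fun s => ((c⁻¹ * φ s : ℝ) : ℂ), by fun_prop, hφ.comp_left Complex.ofReal_zero, ?_, ?_, ?_⟩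
  · exact (tsupport_comp_subset Complex.ofReal_zero _).trans
      ((tsupport_mul_subset_right).trans (hφV.trans interior_subset))
  · rw [integral_complex_ofReal, integral_const_mul, inv_mul_cancel₀ hpos.ne', Complex.ofReal_one]
  · simp_rw [Complex.norm_real, Real.norm_of_nonneg (mul_nonneg (inv_nonneg.2 hpos.le) (hφI _).1)]
    rw [integral_const_mul, inv_mul_cancel₀ hpos.ne']

lemma exists_isApproxIdentity [LocallyCompactSpace G] [μ.IsOpenPosMeasure] :
    ∃ (l : Filter {V : Set G // V ∈ 𝓝 (1 : G)}) (e : {V : Set G // V ∈ 𝓝 (1 : G)} → G → ℂ),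
      l.NeBot ∧ IsApproxIdentity μ l e := by
  choose e he using fun V : {V : Set G // V ∈ 𝓝 (1 : G)} => exists_bump_integral_eq_one μ V.2
  refine ⟨comap Subtype.val (𝓝 1).smallSets, e,
    comap_neBot_iff_frequently.2 ((frequently_smallSets_mem _).mono fun V hV => ⟨⟨V, hV⟩, rfl⟩),
    ⟨fun V => (he V).1, fun V => (he V).2.1, fun V => (he V).2.2.2.1,
      fun V => (he V).2.2.2.2.le, tendsto_comap.smallSets_mono (.of_forall fun V => (he V).2.2.1)⟩⟩

lemma IsApproxIdentity.tendstoUniformly_mulConv {ι : Type*} {l : Filter ι} {e : ι → G → ℂ}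
    (he : IsApproxIdentity μ l e) {g : G → ℂ} (hg : Continuous g) (hgc : HasCompactSupport g) :
    TendstoUniformly (fun i => mulConv μ (e i) g) g l := by
  rw [Metric.tendstoUniformly_iff]
  intro ε hε
  have hW := Metric.tendstoUniformly_iff.1 (tendstoUniformly_leftTranslate hgc hg 1) (ε / 2)
    (half_pos hε)
  filter_upwards [he.tendsto_tsupport.eventually (eventually_smallSets_subset.2 hW)] with i hi u
  have hbound : ∀ s ∈ support (e i), ‖g (s⁻¹ * u) - g u‖ ≤ ε / 2 := fun s hs => by
    simpa [dist_eq_norm, norm_sub_rev] using (hi (subset_tsupport _ hs) u).le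
  rw [dist_comm, dist_eq_norm]
  calc ‖mulConv μ (e i) g u - g u‖
      ≤ ε / 2 * ∫ s, ‖e i s‖ ∂μ := norm_mulConv_sub_le μ (he.continuous i)
        (he.hasCompactSupport i) hg (he.integral_eq_one i) hbound
    _ ≤ ε / 2 * 1 := by gcongr; exact he.integral_norm_le_one i
    _ < ε := by linarith

end ApproxIdentity

section StrongLimits

variable {𝕜 E F : Type*} [NontriviallyNormedField 𝕜] [NormedAddCommGroup E] [NormedSpace 𝕜 E]
  [NormedAddCommGroup F] [NormedSpace 𝕜 F]

lemma ContinuousLinearMap.exists_tendsto_apply_of_mem_span {ι : Type*} {l : Filter ι}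
    {T : ι → E →L[𝕜] F} {S : Set E} (hTS : ∀ x ∈ S, ∃ y, Tendsto (fun i => T i x) l (𝓝 y)) {x : E}
    (hx : x ∈ Submodule.span 𝕜 S) : ∃ y, Tendsto (fun i => T i x) l (𝓝 y) := by
  induction hx using Submodule.span_induction with
  | mem x hx => exact hTS x hx
  | zero => exact ⟨0, by simpa using tendsto_const_nhds⟩
  | add x z _ _ hx hz =>
    obtain ⟨a, ha⟩ := hx
    obtain ⟨b, hb⟩ := hz
    exact ⟨a + b, by simpa using ha.add hb⟩
  | smul c x _ hx =>
    obtain ⟨a, ha⟩ := hx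
    exact ⟨c • a, by simpa using ha.const_smul c⟩

lemma ContinuousLinearMap.exists_tendsto_apply_of_dense [CompleteSpace F] {ι : Type*}
    {l : Filter ι} [l.NeBot] {T : ι → E →L[𝕜] F} {C : ℝ} (hT : ∀ᶠ i in l, ‖T i‖ ≤ C)
    {S : Set E} (hS : Dense S) (hTS : ∀ x ∈ S, ∃ y, Tendsto (fun i => T i x) l (𝓝 y)) (x : E) :
    ∃ y, Tendsto (fun i => T i x) l (𝓝 y) := by
  refine cauchy_map_iff_exists_tendsto.1 (Metric.cauchy_iff.2 ⟨inferInstance, fun ε hε => ?_⟩)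
  have hC : 0 ≤ C := let ⟨i, hi⟩ := hT.exists; (norm_nonneg _).trans hi
  obtain ⟨y, hyS, hyx⟩ := hS.exists_dist_lt x (show 0 < ε / (4 * (C + 1)) by positivity)
  obtain ⟨z, hz⟩ := hTS y hyS
  have hclose : ∀ i, ‖T i‖ ≤ C → dist (T i x) (T i y) ≤ ε / 4 := fun i hi => calc
    dist (T i x) (T i y) ≤ C * dist x y := by
      rw [dist_eq_norm, dist_eq_norm, ← map_sub]; exact (T i).le_of_opNorm_le hi _
    _ ≤ (C + 1) * (ε / (4 * (C + 1))) := by gcongr; linarith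
    _ = ε / 4 := by field_simp
  refine ⟨_, image_mem_map (hT.and (Metric.tendsto_nhds.1 hz (ε / 4) (by positivity))), ?_⟩
  rintro _ ⟨i, ⟨hi, hiz⟩, rfl⟩ _ ⟨j, ⟨hj, hjz⟩, rfl⟩
  have hyy := dist_triangle_right (T i y) (T j y) z
  have hxx := dist_triangle4 (T i x) (T i y) (T j y) (T j x)
  rw [dist_comm (T j y)] at hxx
  linarith [hclose i hi, hclose j hj]

lemma ContinuousLinearMap.exists_tendsto_apply_of_dense_span [CompleteSpace F] {ι : Type*}
    {l : Filter ι} [l.NeBot] {T : ι → E →L[𝕜] F} {C : ℝ} (hT : ∀ᶠ i in l, ‖T i‖ ≤ C)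
    {S : Set E} (hS : Dense (Submodule.span 𝕜 S : Set E))
    (hTS : ∀ x ∈ S, ∃ y, Tendsto (fun i => T i x) l (𝓝 y)) :
    ∃ A : E →L[𝕜] F, ∀ x, Tendsto (fun i => T i x) l (𝓝 (A x)) := by
  choose f hf using exists_tendsto_apply_of_dense hT hS
    fun x hx => exists_tendsto_apply_of_mem_span hTS hx
  have hmem : f ∈ closure ((⇑) '' Metric.closedBall (0 : E →L[𝕜] F) C) :=
    mem_closure_of_tendsto (tendsto_pi_nhds.2 hf)
      (hT.mono fun i hi => mem_image_of_mem _ (mem_closedBall_zero_iff.2 hi))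
  exact ⟨ofMemClosureImageCoeBounded f Metric.isBounded_closedBall hmem, hf⟩

lemma ContinuousLinearMap.opNorm_le_of_tendsto_apply {ι : Type*} {l : Filter ι} [l.NeBot]
    {T : ι → E →L[𝕜] F} {A : E →L[𝕜] F} {C : ℝ} (hT : ∀ᶠ i in l, ‖T i‖ ≤ C)
    (hA : ∀ x, Tendsto (fun i => T i x) l (𝓝 (A x))) : ‖A‖ ≤ C := by
  have hC : 0 ≤ C := let ⟨i, hi⟩ := hT.exists; (norm_nonneg _).trans hi
  refine A.opNorm_le_bound hC fun x => le_of_tendsto (hA x).norm ?_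
  filter_upwards [hT] with i hi using (T i).le_of_opNorm_le hi x

lemma ContinuousLinearMap.continuous_apply_of_dense_span {X : Type*} [TopologicalSpace X]
    {π : X → E →L[𝕜] F} (hπ : ∀ t₀, ∃ C, ∀ᶠ t in 𝓝 t₀, ‖π t‖ ≤ C) {S : Set E}
    (hS : Dense (Submodule.span 𝕜 S : Set E)) (hπS : ∀ y ∈ S, Continuous fun t => π t y)
    (x : E) : Continuous fun t => π t x := by
  have hspan : ∀ y ∈ Submodule.span 𝕜 S, Continuous fun t => π t y := by
    intro y hy
    induction hy using Submodule.span_induction with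
    | mem y hy => exact hπS y hy
    | zero => simpa using continuous_const
    | add y z _ _ hy hz => simp only [map_add]; exact hy.add hz
    | smul c y _ hy => simp only [map_smul]; exact hy.const_smul c
  refine TendstoLocallyUniformly.continuous (F := fun y t => π t y) (p := 𝓝 x) ?_
    ((mem_closure_iff_frequently.1 (hS x)).mono hspan)
  refine Metric.tendstoLocallyUniformly_iff.2 fun ε hε t₀ => ?_
  obtain ⟨C, hC⟩ := hπ t₀
  refine ⟨_, hC, ?_⟩
  filter_upwards [Metric.ball_mem_nhds x (show 0 < ε / (|C| + 1) by positivity)] with y hy t ht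
  calc dist (π t x) (π t y) ≤ |C| * dist x y := by
        rw [dist_eq_norm, dist_eq_norm, ← map_sub]
        exact (π t).le_of_opNorm_le (ht.trans (le_abs_self C)) _
    _ < (|C| + 1) * (ε / (|C| + 1)) := by
        gcongr
        · linarith
        · exact Metric.mem_ball'.1 hy
    _ = ε := by field_simp

end StrongLimits

lemma ContinuousLinearMap.exists_apply_eq_integral {𝕜 E F X : Type*} [NontriviallyNormedField 𝕜]
    [NormedAddCommGroup E] [NormedSpace 𝕜 E] [NormedAddCommGroup F] [NormedSpace 𝕜 F]
    [NormedSpace ℝ F] [SMulCommClass ℝ 𝕜 F] [MeasurableSpace X] {ν : Measure X}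
    {T : X → E →L[𝕜] F} (hT : ∀ x, Integrable (fun t => T t x) ν) {b : X → ℝ}
    (hb : Integrable b ν) (hTb : ∀ t, ‖T t‖ ≤ b t) :
    ∃ R : E →L[𝕜] F, ∀ x, R x = ∫ t, T t x ∂ν := by
  refine ⟨LinearMap.mkContinuous ⟨⟨fun x => ∫ t, T t x ∂ν, fun x y => ?_⟩, fun c x => ?_⟩
    (∫ t, b t ∂ν) fun x => ?_, fun x => rfl⟩
  · simp only [map_add]
    exact integral_add (hT x) (hT y)
  · simp only [map_smul]
    exact integral_smul c _
  · calc ‖∫ t, T t x ∂ν‖ ≤ ∫ t, b t * ‖x‖ ∂ν :=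
          norm_integral_le_of_norm_le (hb.mul_const _)
            (.of_forall fun t => (T t).le_of_opNorm_le (hTb t) x)
      _ = (∫ t, b t ∂ν) * ‖x‖ := integral_mul_const _ _

lemma integral_norm_le_of_support_subset {X F : Type*} [MeasurableSpace X] {μ : Measure X}
    [NormedAddCommGroup F] {h : X → F} {K : Set X} (hK : μ K < ⊤) (hsupp : support h ⊆ K)
    {b : ℝ} (hb : ∀ s, ‖h s‖ ≤ b) : ∫ s, ‖h s‖ ∂μ ≤ b * μ.real K := by
  rw [← setIntegral_eq_integral_of_forall_compl_eq_zero fun s hs => by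
    rw [notMem_support.1 fun h' => hs (hsupp h'), norm_zero]]
  exact (Real.le_norm_self _).trans
    (norm_setIntegral_le_of_norm_le_const (f := fun s => ‖h s‖) hK fun s _ => by simpa using hb s)

section Representation

variable {G E : Type*} [Group G] [TopologicalSpace G] [MeasurableSpace G]
  [NormedAddCommGroup E] [NormedSpace ℂ E]

def ccRange (Ψ : (G → ℂ) → (E →L[ℂ] E)) : Set E :=
  {y | ∃ (f : G → ℂ) (x : E), Continuous f ∧ HasCompactSupport f ∧ y = Ψ f x}

structure IsLocallyBoundedRep (μ : Measure G) (Ψ : (G → ℂ) → (E →L[ℂ] E)) : Prop where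
  map_add : ∀ f g : G → ℂ, Continuous f → HasCompactSupport f →
    Continuous g → HasCompactSupport g → Ψ (f + g) = Ψ f + Ψ g
  map_smul : ∀ (c : ℂ) (f : G → ℂ), Continuous f → HasCompactSupport f → Ψ (c • f) = c • Ψ f
  map_mulConv : ∀ f g : G → ℂ, Continuous f → HasCompactSupport f →
    Continuous g → HasCompactSupport g → Ψ (mulConv μ f g) = (Ψ f).comp (Ψ g)
  locallyBounded : ∀ K : Set G, IsCompact K → ∃ C : ℝ, ∀ f : G → ℂ, Continuous f →
    tsupport f ⊆ K → ‖Ψ f‖ ≤ C * ∫ t, ‖f t‖ ∂μ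

namespace IsLocallyBoundedRep

variable {μ : Measure G} {Ψ : (G → ℂ) → (E →L[ℂ] E)}

lemma map_sub (hΨ : IsLocallyBoundedRep μ Ψ) {f g : G → ℂ} (hf : Continuous f)
    (hfc : HasCompactSupport f) (hg : Continuous g) (hgc : HasCompactSupport g) :
    Ψ (f - g) = Ψ f - Ψ g := by
  rw [eq_sub_iff_add_eq, ← hΨ.map_add _ _ (hf.sub hg) (hfc.sub hgc) hg hgc, sub_add_cancel]

variable [IsTopologicalGroup G]

lemma exists_eventually_norm_map_leftTranslate_le [LocallyCompactSpace G] [BorelSpace G]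
    [μ.IsMulLeftInvariant] (hΨ : IsLocallyBoundedRep μ Ψ) {ι : Type*} {l : Filter ι}
    {e : ι → G → ℂ} (he : IsApproxIdentity μ l e) {N : Set G} (hN : IsCompact N) :
    ∃ C, ∀ t ∈ N, ∀ᶠ i in l, ‖Ψ (leftTranslate t (e i))‖ ≤ C := by
  obtain ⟨V, hV, hV₁⟩ := exists_compact_mem_nhds (1 : G)
  obtain ⟨C, hC⟩ := hΨ.locallyBounded _ (hN.mul hV).closure
  refine ⟨max C 0, fun t ht => ?_⟩
  filter_upwards [he.tendsto_tsupport.eventually (eventually_smallSets_subset.2 hV₁)] with i hi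
  have hsupp : tsupport (leftTranslate t (e i)) ⊆ closure (N * V) :=
    closure_mono (support_leftTranslate_subset ht ((subset_tsupport _).trans hi))
  calc ‖Ψ (leftTranslate t (e i))‖ ≤ C * ∫ s, ‖e i (t⁻¹ * s)‖ ∂μ :=
        hC _ ((he.continuous i).leftTranslate t) hsupp
    _ ≤ max C 0 * 1 := by
      rw [integral_mul_left_eq_self (fun s => ‖e i s‖) t⁻¹]
      exact mul_le_mul (le_max_left C 0) (he.integral_norm_le_one i)
        (integral_nonneg fun _ => norm_nonneg _) (le_max_right C 0)
    _ = max C 0 := mul_one _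

variable [IsFiniteMeasureOnCompacts μ]

lemma exists_norm_le_of_norm_le (hΨ : IsLocallyBoundedRep μ Ψ) {K : Set G} (hK : IsCompact K) :
    ∃ C, 0 ≤ C ∧ ∀ h : G → ℂ, Continuous h → support h ⊆ K → ∀ b, (∀ s, ‖h s‖ ≤ b) →
      ‖Ψ h‖ ≤ C * b := by
  obtain ⟨C, hC⟩ := hΨ.locallyBounded _ hK.closure
  refine ⟨max C 0 * μ.real (closure K), by positivity, fun h hh hsupp b hb => ?_⟩
  calc ‖Ψ h‖ ≤ C * ∫ s, ‖h s‖ ∂μ := hC h hh (closure_mono hsupp)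
    _ ≤ max C 0 * (b * μ.real (closure K)) :=
      mul_le_mul (le_max_left C 0) (integral_norm_le_of_support_subset
        hK.closure.measure_lt_top (hsupp.trans subset_closure) hb)
        (integral_nonneg fun _ => norm_nonneg _) (le_max_right C 0)
    _ = max C 0 * μ.real (closure K) * b := by ring

lemma tendsto_of_tendstoUniformly (hΨ : IsLocallyBoundedRep μ Ψ) {ι : Type*} {l : Filter ι}
    {h : ι → G → ℂ} {h₀ : G → ℂ} (hh : ∀ i, Continuous (h i)) (hh₀ : Continuous h₀)
    {K : Set G} (hK : IsCompact K) (hsupp : ∀ᶠ i in l, support (h i) ⊆ K)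
    (hsupp₀ : support h₀ ⊆ K) (hlim : TendstoUniformly h h₀ l) :
    Tendsto (fun i => Ψ (h i)) l (𝓝 (Ψ h₀)) := by
  obtain ⟨C, hC0, hC⟩ := hΨ.exists_norm_le_of_norm_le hK
  refine Metric.tendsto_nhds.2 fun ε hε => ?_
  filter_upwards [hsupp, Metric.tendstoUniformly_iff.1 hlim (ε / (C + 1)) (by positivity)]
    with i hi hiε
  rw [dist_eq_norm, ← hΨ.map_sub (hh i) (.of_support_subset_isCompact hK hi) hh₀
    (.of_support_subset_isCompact hK hsupp₀)]
  calc ‖Ψ (h i - h₀)‖ ≤ C * (ε / (C + 1)) :=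
        hC _ ((hh i).sub hh₀) ((support_sub _ _).trans (union_subset hi hsupp₀)) _
          fun s => by rw [Pi.sub_apply, ← dist_eq_norm, dist_comm]; exact (hiε s).le
    _ < (C + 1) * (ε / (C + 1)) := by gcongr; linarith
    _ = ε := by field_simp

lemma continuous_leftTranslate (hΨ : IsLocallyBoundedRep μ Ψ) [LocallyCompactSpace G]
    {g : G → ℂ} (hg : Continuous g) (hgc : HasCompactSupport g) :
    Continuous fun t => Ψ (leftTranslate t g) := by
  refine continuous_iff_continuousAt.2 fun t₀ => ?_
  obtain ⟨N, hN, hN₀⟩ := exists_compact_mem_nhds t₀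
  exact hΨ.tendsto_of_tendstoUniformly (hg.leftTranslate ·) (hg.leftTranslate t₀) (hN.mul hgc)
    (eventually_of_mem hN₀ fun t ht => support_leftTranslate_subset ht (subset_tsupport g))
    (support_leftTranslate_subset (mem_of_mem_nhds hN₀) (subset_tsupport g))
    (tendstoUniformly_leftTranslate hgc hg t₀)

lemma exists_bcf_extension [LocallyCompactSpace G] (hΨ : IsLocallyBoundedRep μ Ψ) {K : Set G}
    (hK : IsCompact K) :
    ∃ Φ : (G →ᵇ ℂ) →L[ℂ] E →L[ℂ] E, ∀ h : G →ᵇ ℂ, support h ⊆ K → Φ h = Ψ h := by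
  obtain ⟨χ, hχK, -, hχc, hχI⟩ :=
    exists_continuous_one_zero_of_isCompact hK isClosed_empty (disjoint_empty K)
  obtain ⟨C, -, hC⟩ := hΨ.exists_norm_le_of_norm_le hχc
  let χ' : G → ℂ := fun s => (χ s : ℂ)
  have hcont : ∀ h : G →ᵇ ℂ, Continuous (χ' * ⇑h) := fun h => by fun_prop
  have hsupp : ∀ h : G →ᵇ ℂ, support (χ' * ⇑h) ⊆ tsupport χ := fun h =>
    (support_mul_subset_left _ _).trans fun s hs =>
      subset_tsupport _ fun h0 => hs (by simp [χ', h0])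
  have hcs : ∀ h : G →ᵇ ℂ, HasCompactSupport (χ' * ⇑h) := fun h =>
    .of_support_subset_isCompact hχc (hsupp h)
  refine ⟨LinearMap.mkContinuous ⟨⟨fun h => Ψ (χ' * ⇑h), fun h₁ h₂ => ?_⟩, fun c h => ?_⟩ C
    fun h => hC _ (hcont h) (hsupp h) _ fun s => ?_, fun h hh => ?_⟩
  · simp only [BoundedContinuousFunction.coe_add, mul_add]
    exact hΨ.map_add _ _ (hcont h₁) (hcs h₁) (hcont h₂) (hcs h₂)
  · change Ψ (χ' * (c • ⇑h)) = c • Ψ (χ' * ⇑h)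
    rw [mul_smul_comm]
    exact hΨ.map_smul c _ (hcont h) (hcs h)
  · rw [Pi.mul_apply, norm_mul, Complex.norm_real, Real.norm_of_nonneg (hχI s).1]
    exact (mul_le_of_le_one_left (norm_nonneg _) (hχI s).2).trans (h.norm_coe_le_norm s)
  · change Ψ (χ' * ⇑h) = Ψ h
    congr 1
    ext s
    by_cases hs : h s = 0
    · simp [hs]
    · simp [χ', hχK (hh hs)]

variable [LocallyCompactSpace G] [BorelSpace G]

lemma map_mulConv_eq_integral [CompleteSpace E] (hΨ : IsLocallyBoundedRep μ Ψ) {f g : G → ℂ}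
    (hf : Continuous f) (hfc : HasCompactSupport f) (hg : Continuous g)
    (hgc : HasCompactSupport g) : Ψ (mulConv μ f g) = ∫ t, f t • Ψ (leftTranslate t g) ∂μ := by
  obtain ⟨ξ, hξi, hξ, hξconv⟩ := exists_integral_bcf_eq_mulConv μ hf hfc hg hgc
  obtain ⟨Φ, hΦ⟩ := hΨ.exists_bcf_extension (hfc.mul hgc)
  have hΦξ : ∀ t, Φ (ξ t) = f t • Ψ (leftTranslate t g) := fun t => by
    by_cases ht : f t = 0
    · have : ξ t = 0 := by ext s; simp [hξ, ht]
      simp [this, ht]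
    · rw [hΦ _ (hξ t ▸ (support_const_smul_subset _ _).trans (support_leftTranslate_subset
        (subset_tsupport f ht) (subset_tsupport g))), hξ t,
        hΨ.map_smul _ _ (hg.leftTranslate t) (hgc.leftTranslate t)]
  calc Ψ (mulConv μ f g) = Φ (∫ t, ξ t ∂μ) := by
        rw [hΦ _ (hξconv ▸ (support_mulConv_subset μ f g).trans
          (mul_subset_mul (subset_tsupport f) (subset_tsupport g))), hξconv]
    _ = ∫ t, Φ (ξ t) ∂μ := (Φ.integral_comp_comm hξi).symm
    _ = ∫ t, f t • Ψ (leftTranslate t g) ∂μ := by simp only [hΦξ]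

lemma apply_eq_integral [CompleteSpace E] (hΨ : IsLocallyBoundedRep μ Ψ)
    (hnd : Dense (Submodule.span ℂ (ccRange Ψ) : Set E)) {π : G → E →L[ℂ] E}
    (hπΨ : ∀ t f, Continuous f → HasCompactSupport f → ∀ x, π t (Ψ f x) = Ψ (leftTranslate t f) x)
    (hπ : ∀ N, IsCompact N → ∃ C, ∀ t ∈ N, ‖π t‖ ≤ C) (hπc : ∀ x, Continuous fun t => π t x)
    {f : G → ℂ} (hf : Continuous f) (hfc : HasCompactSupport f) (x : E) :
    Ψ f x = ∫ t, f t • π t x ∂μ := by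
  obtain ⟨C, hC⟩ := hπ _ hfc
  obtain ⟨R, hR⟩ :=
    ContinuousLinearMap.exists_apply_eq_integral (ν := μ) (T := fun t => f t • π t)
      (fun x => (hf.smul (hπc x)).integrable_of_hasCompactSupport hfc.smul_right)
      ((hf.norm.integrable_of_hasCompactSupport hfc.norm).mul_const C) fun t => by
        rw [norm_smul]
        by_cases ht : f t = 0
        · simp [ht]
        · exact mul_le_mul_of_nonneg_left (hC t (subset_tsupport f ht)) (norm_nonneg _)
  suffices Ψ f = R by rw [this, hR]; rfl
  refine ContinuousLinearMap.ext_on hnd ?_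
  rintro _ ⟨g, y, hg, hgc, rfl⟩
  have hint : Integrable (fun t => f t • Ψ (leftTranslate t g)) μ :=
    (hf.smul (hΨ.continuous_leftTranslate hg hgc)).integrable_of_hasCompactSupport hfc.smul_right
  calc Ψ f (Ψ g y) = Ψ (mulConv μ f g) y := by rw [hΨ.map_mulConv _ _ hf hfc hg hgc]; rfl
    _ = ∫ t, f t • Ψ (leftTranslate t g) y ∂μ := by
      rw [hΨ.map_mulConv_eq_integral hf hfc hg hgc, ContinuousLinearMap.integral_apply hint]; rfl
    _ = R (Ψ g y) := by simp [hR, hπΨ _ _ hg hgc]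

variable [μ.IsMulLeftInvariant]

lemma tendsto_map_leftTranslate_approxIdentity (hΨ : IsLocallyBoundedRep μ Ψ) {ι : Type*}
    {l : Filter ι} {e : ι → G → ℂ} (he : IsApproxIdentity μ l e) (t : G) {f : G → ℂ}
    (hf : Continuous f) (hfc : HasCompactSupport f) (x : E) :
    Tendsto (fun i => Ψ (leftTranslate t (e i)) (Ψ f x)) l (𝓝 (Ψ (leftTranslate t f) x)) := by
  have hconv : ∀ i, Ψ (leftTranslate t (e i)) (Ψ f x) =
      Ψ (leftTranslate t (mulConv μ (e i) f)) x := fun i => by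
    rw [← mulConv_leftTranslate, hΨ.map_mulConv _ _ ((he.continuous i).leftTranslate t)
      ((he.hasCompactSupport i).leftTranslate t) hf hfc]
    rfl
  simp only [hconv]
  obtain ⟨V, hV, hV₁⟩ := exists_compact_mem_nhds (1 : G)
  have hlim : Tendsto (fun i => Ψ (leftTranslate t (mulConv μ (e i) f))) l
      (𝓝 (Ψ (leftTranslate t f))) := by
    refine hΨ.tendsto_of_tendstoUniformly
      (fun i => ((he.continuous i).mulConv μ (he.hasCompactSupport i) hf hfc).leftTranslate t)
      (hf.leftTranslate t) (isCompact_singleton.mul (hV.mul hfc)) ?_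
      (support_leftTranslate_subset (mem_singleton t)
        ((subset_tsupport f).trans (subset_mul_right _ (mem_of_mem_nhds hV₁))))
      ((he.tendstoUniformly_mulConv μ hf hfc).comp (t⁻¹ * ·))
    filter_upwards [he.tendsto_tsupport.eventually (eventually_smallSets_subset.2 hV₁)] with i hi
    exact support_leftTranslate_subset (mem_singleton t) ((support_mulConv_subset μ _ _).trans
      (mul_subset_mul ((subset_tsupport _).trans hi) (subset_tsupport f)))
  exact ((ContinuousLinearMap.apply ℂ E x).continuous.tendsto _).comp hlim

lemma exists_apply_map_eq_map_leftTranslate [CompleteSpace E] [μ.IsOpenPosMeasure]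
    (hΨ : IsLocallyBoundedRep μ Ψ) (hnd : Dense (Submodule.span ℂ (ccRange Ψ) : Set E)) :
    ∃ π : G → E →L[ℂ] E,
      (∀ t f, Continuous f → HasCompactSupport f → ∀ x, π t (Ψ f x) = Ψ (leftTranslate t f) x) ∧
      ∀ N, IsCompact N → ∃ C, ∀ t ∈ N, ‖π t‖ ≤ C := by
  obtain ⟨l, e, _, he⟩ := exists_isApproxIdentity μ
  have hlim : ∀ t, ∃ A : E →L[ℂ] E,
      ∀ x, Tendsto (fun i => Ψ (leftTranslate t (e i)) x) l (𝓝 (A x)) := fun t => by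
    obtain ⟨C, hC⟩ := hΨ.exists_eventually_norm_map_leftTranslate_le he isCompact_singleton
    refine ContinuousLinearMap.exists_tendsto_apply_of_dense_span (hC t rfl) hnd ?_
    rintro _ ⟨f, x, hf, hfc, rfl⟩
    exact ⟨_, hΨ.tendsto_map_leftTranslate_approxIdentity he t hf hfc x⟩
  choose π hπ using hlim
  refine ⟨π, fun t f hf hfc x => tendsto_nhds_unique (hπ t _)
    (hΨ.tendsto_map_leftTranslate_approxIdentity he t hf hfc x), fun N hN => ?_⟩
  obtain ⟨C, hC⟩ := hΨ.exists_eventually_norm_map_leftTranslate_le he hN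
  exact ⟨C, fun t ht => ContinuousLinearMap.opNorm_le_of_tendsto_apply (hC t ht) (hπ t)⟩

end IsLocallyBoundedRep

end Representation

lemma apply_map_eq_map_leftTranslate {G E : Type*} [Group G] [TopologicalSpace G]
    [IsTopologicalGroup G] [MeasurableSpace G] [BorelSpace G] {μ : Measure G}
    [μ.IsMulLeftInvariant] [IsFiniteMeasureOnCompacts μ] [NormedAddCommGroup E]
    [NormedSpace ℂ E] [CompleteSpace E] {Ψ : (G → ℂ) → (E →L[ℂ] E)} {π : G → E →L[ℂ] E}
    (hmul : ∀ s t, π (s * t) = (π s).comp (π t)) (hπc : ∀ x, Continuous fun t => π t x)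
    (hint : ∀ f : G → ℂ, Continuous f → HasCompactSupport f → ∀ x, Ψ f x = ∫ t, f t • π t x ∂μ)
    (t : G) {g : G → ℂ} (hg : Continuous g) (hgc : HasCompactSupport g) (x : E) :
    π t (Ψ g x) = Ψ (leftTranslate t g) x := by
  rw [hint g hg hgc, hint _ (hg.leftTranslate t) (hgc.leftTranslate t),
    ← (π t).integral_comp_comm (show Integrable (fun s => g s • π s x) μ from
      (hg.smul (hπc x)).integrable_of_hasCompactSupport hgc.smul_right),
    ← integral_mul_left_eq_self (fun s => leftTranslate t g s • π s x) t]
  simp [hmul]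

/-- Every non-degenerate locally bounded representation `Ψ` of the convolution
algebra `C_c(G)` on a Banach space `E` comes from a unique norm-continuous representation
`μ : G → L(E)` via `Ψ(f)x = ∫ f(t) μ_t(x) dt`. -/
theorem stmt5 {G E : Type*} [Group G] [TopologicalSpace G] [IsTopologicalGroup G]
    [LocallyCompactSpace G] [MeasurableSpace G] [BorelSpace G]
    (μ : Measure G) [μ.IsHaarMeasure]
    [NormedAddCommGroup E] [NormedSpace ℂ E] [CompleteSpace E]
    (Ψ : (G → ℂ) → (E →L[ℂ] E))
    (hadd : ∀ f g : G → ℂ, Continuous f → HasCompactSupport f →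
      Continuous g → HasCompactSupport g → Ψ (f + g) = Ψ f + Ψ g)
    (hsmul : ∀ (c : ℂ) (f : G → ℂ), Continuous f → HasCompactSupport f →
      Ψ (c • f) = c • Ψ f)
    (hmul : ∀ f g : G → ℂ, Continuous f → HasCompactSupport f →
      Continuous g → HasCompactSupport g →
      Ψ (fun t => ∫ s, f s * g (s⁻¹ * t) ∂μ) = (Ψ f).comp (Ψ g))
    (hlb : ∀ K : Set G, IsCompact K → ∃ C : ℝ, ∀ f : G → ℂ, Continuous f →
      tsupport f ⊆ K → ‖Ψ f‖ ≤ C * ∫ t, ‖f t‖ ∂μ)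
    (hnd : Dense ((Submodule.span ℂ
      {y : E | ∃ (f : G → ℂ) (x : E), Continuous f ∧ HasCompactSupport f ∧ y = Ψ f x}
        : Submodule ℂ E) : Set E)) :
    ∃! π : G → (E →L[ℂ] E),
      (∀ s t : G, π (s * t) = (π s).comp (π t)) ∧ π 1 = 1 ∧
      (∀ x : E, Continuous fun t => π t x) ∧
      (∀ f : G → ℂ, Continuous f → HasCompactSupport f →
        ∀ x : E, Ψ f x = ∫ t, f t • π t x ∂μ) := by
  have hΨ : IsLocallyBoundedRep μ Ψ := ⟨hadd, hsmul, hmul, hlb⟩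
  obtain ⟨π, hπΨ, hπ⟩ := hΨ.exists_apply_map_eq_map_leftTranslate hnd
  have hπloc : ∀ t₀, ∃ C, ∀ᶠ t in 𝓝 t₀, ‖π t‖ ≤ C := fun t₀ => by
    obtain ⟨N, hN, hN₀⟩ := exists_compact_mem_nhds t₀
    obtain ⟨C, hC⟩ := hπ N hN
    exact ⟨C, eventually_of_mem hN₀ hC⟩
  have hπc : ∀ x, Continuous fun t => π t x := by
    refine ContinuousLinearMap.continuous_apply_of_dense_span hπloc hnd ?_
    rintro _ ⟨f, x, hf, hfc, rfl⟩
    simpa only [hπΨ _ f hf hfc] using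
      (hΨ.continuous_leftTranslate hf hfc).clm_apply continuous_const
  refine ⟨π, ⟨fun s t => ?_, ?_, hπc, fun f hf hfc => hΨ.apply_eq_integral hnd hπΨ hπ hπc hf hfc⟩,
    ?_⟩
  · refine ContinuousLinearMap.ext_on hnd ?_
    rintro _ ⟨f, x, hf, hfc, rfl⟩
    simp [hπΨ _ f hf hfc, hπΨ _ _ (hf.leftTranslate _) (hfc.leftTranslate _),
      leftTranslate_leftTranslate]
  · refine ContinuousLinearMap.ext_on hnd ?_
    rintro _ ⟨f, x, hf, hfc, rfl⟩
    simp [hπΨ _ f hf hfc]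
  · rintro π' ⟨h'mul, -, h'c, h'int⟩
    funext t
    refine ContinuousLinearMap.ext_on hnd ?_
    rintro _ ⟨f, x, hf, hfc, rfl⟩
    rw [apply_map_eq_map_leftTranslate h'mul h'c h'int t hf hfc, hπΨ t f hf hfc]
end

section
/- Let G be a locally compact group with left Haar measure, E a Banach space, μ: G → L(E) a norm-continuous anti-representation, π(t) = μ(t)* the induced representation on E*, Φ(f) = ∫ f(t)μ(t)dt the integrated anti-representation of C_c(G), and Φ̌(f) = Φ(f)*. If c: G → E* is a weak*-continuous map satisfying the cocycle identity c(st) = π(s)(c(t)) + c(s), then the map I(c): C_c(G) → E* defined by I(c)(f)(x) = ∫_G f(t) c(t)(x) dt is locally bounded (L¹-bounded on functions supported in each fixed compact set) and satisfies I(c)(f*g) = Φ̌(f) I(c)(g) + ε_G(g) I(c)(f) for all f, g ∈ C_c(G), where ε_G(g) = ∫_G g(t) dt. -/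
open Filter Topology MeasureTheory

/-!
By the uniform boundedness principle a weak*-continuous `c` is norm-bounded on each compact `K`,
which gives `‖I(c)(f)(x)‖ ≤ C ‖f‖₁ ‖x‖` for `f` supported in `K`.

For the identity, Fubini and left invariance of the Haar measure give
`∫ (f ⋆ g)(t) c(t)x dt = ∫∫ f(s) g(u) c(su)x ds du`, and the cocycle identity
`c(su) = c(u) ∘ μ(s) + c(s)` splits the inner integral into `c(u)(Φ(f)x) + I(c)(f)(x)`.
-/

theorem IsCompact.exists_bound_opNorm_of_continuous_apply {X 𝕜 E F : Type*}
    [TopologicalSpace X] [NontriviallyNormedField 𝕜] [NormedAddCommGroup E] [NormedSpace 𝕜 E]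
    [CompleteSpace E] [NormedAddCommGroup F] [NormedSpace 𝕜 F] {K : Set X} (hK : IsCompact K)
    {c : X → E →L[𝕜] F} (hc : ∀ x, Continuous fun t => c t x) :
    ∃ C, ∀ t ∈ K, ‖c t‖ ≤ C := by
  have hpointwise : ∀ x, ∃ C, ∀ t : K, ‖c t x‖ ≤ C := fun x ↦ by
    obtain ⟨C, hC⟩ := hK.exists_bound_of_continuousOn (hc x).continuousOn
    exact ⟨C, fun t ↦ hC t t.2⟩
  obtain ⟨C, hC⟩ := banach_steinhaus hpointwise
  exact ⟨C, fun t ht ↦ hC ⟨t, ht⟩⟩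

theorem norm_integral_mul_apply_le {X 𝕜 E : Type*} [MeasurableSpace X] [RCLike 𝕜]
    [NormedAddCommGroup E] [NormedSpace 𝕜 E] (ν : Measure X) {f : X → 𝕜}
    {c : X → E →L[𝕜] 𝕜} {K : Set X} {C : ℝ} (hf : Integrable f ν)
    (hfK : Function.support f ⊆ K) (hC : ∀ t ∈ K, ‖c t‖ ≤ C) (x : E) :
    ‖∫ t, f t * c t x ∂ν‖ ≤ C * (∫ t, ‖f t‖ ∂ν) * ‖x‖ := by
  have hbound : ∀ t, ‖f t * c t x‖ ≤ ‖f t‖ * (C * ‖x‖) := fun t ↦ by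
    by_cases ht : f t = 0
    · simp [ht]
    rw [norm_mul]
    exact mul_le_mul_of_nonneg_left ((c t).le_of_opNorm_le (hC t (hfK ht)) x) (norm_nonneg _)
  calc ‖∫ t, f t * c t x ∂ν‖ ≤ ∫ t, ‖f t‖ * (C * ‖x‖) ∂ν :=
        norm_integral_le_of_norm_le (hf.norm.mul_const _) (.of_forall hbound)
    _ = C * (∫ t, ‖f t‖ ∂ν) * ‖x‖ := by rw [integral_mul_const]; ring

theorem HasCompactSupport.mul_prod {X Y R : Type*} [TopologicalSpace X] [TopologicalSpace Y]
    [MulZeroClass R] {f : X → R} {g : Y → R} (hf : HasCompactSupport f)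
    (hg : HasCompactSupport g) : HasCompactSupport fun p : X × Y => f p.1 * g p.2 := by
  refine .intro' (hf.prod hg) ((isClosed_tsupport f).prod (isClosed_tsupport g)) fun p hp ↦ ?_
  rcases not_and_or.mp hp with h | h
  · rw [image_eq_zero_of_notMem_tsupport h, zero_mul]
  · rw [image_eq_zero_of_notMem_tsupport h, mul_zero]

section Convolution

variable {G 𝕜 : Type*} [Group G] [TopologicalSpace G] [IsTopologicalGroup G]
  [MeasurableSpace G] [BorelSpace G] [RCLike 𝕜] (ν : Measure G) [ν.IsMulLeftInvariant]
  [IsFiniteMeasureOnCompacts ν]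

theorem integral_convolution_mul_eq {f g h : G → 𝕜} (hf : Continuous f)
    (hfc : HasCompactSupport f) (hg : Continuous g) (hgc : HasCompactSupport g)
    (hh : Continuous h) :
    ∫ t, (∫ s, f s * g (s⁻¹ * t) ∂ν) * h t ∂ν = ∫ u, g u * ∫ s, f s * h (s * u) ∂ν ∂ν := by
  set H : G → G → 𝕜 := fun s u => f s * g u * h (s * u)
  have hHc : Continuous H.uncurry :=
    ((hf.comp continuous_fst).mul (hg.comp continuous_snd)).mul (hh.comp continuous_mul)
  have hHs : HasCompactSupport H.uncurry := (hfc.mul_prod hgc).mul_right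
  have hFc : Continuous fun p : G × G => H p.1 (p.1⁻¹ * p.2) :=
    hHc.comp (Homeomorph.shearMulRight G).symm.continuous
  have hFs : HasCompactSupport fun p : G × G => H p.1 (p.1⁻¹ * p.2) :=
    hHs.comp_homeomorph (Homeomorph.shearMulRight G).symm
  calc ∫ t, (∫ s, f s * g (s⁻¹ * t) ∂ν) * h t ∂ν
      = ∫ t, ∫ s, H s (s⁻¹ * t) ∂ν ∂ν := by simp_rw [H, mul_inv_cancel_left, integral_mul_const]
    _ = ∫ s, ∫ t, H s (s⁻¹ * t) ∂ν ∂ν :=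
        (integral_integral_swap_of_hasCompactSupport (f := fun s t => H s (s⁻¹ * t)) hFc hFs).symm
    _ = ∫ s, ∫ u, H s u ∂ν ∂ν := by
        congr with s
        simpa only [inv_mul_cancel_left] using
          (integral_mul_left_eq_self (fun t => H s (s⁻¹ * t)) s).symm
    _ = ∫ u, ∫ s, H s u ∂ν ∂ν := integral_integral_swap_of_hasCompactSupport hHc hHs
    _ = ∫ u, g u * ∫ s, f s * h (s * u) ∂ν ∂ν := by
        simp_rw [H, mul_assoc, mul_left_comm (f _), integral_const_mul]

end Convolution

theorem integral_mul_cocycle_apply {G E : Type*} [Mul G] [MeasurableSpace G]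
    [NormedAddCommGroup E] [NormedSpace ℂ E] [CompleteSpace E] (ν : Measure G)
    {μ : G → E →L[ℂ] E} {c : G → E →L[ℂ] ℂ} (hcoc : ∀ s t, c (s * t) = (c t).comp (μ s) + c s)
    {f : G → ℂ} {x : E} (hfμ : Integrable (fun s => f s • μ s x) ν)
    (hfc : Integrable (fun s => f s * c s x) ν) (u : G) :
    ∫ s, f s * c (s * u) x ∂ν = c u (∫ s, f s • μ s x ∂ν) + ∫ s, f s * c s x ∂ν := by
  have hsplit : ∀ s, f s * c (s * u) x = c u (f s • μ s x) + f s * c s x := fun s ↦ by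
    simp only [hcoc, add_apply, ContinuousLinearMap.comp_apply, map_smul, smul_eq_mul, mul_add]
  simp_rw [hsplit]
  rw [integral_add ((c u).integrable_comp hfμ) hfc, (c u).integral_comp_comm hfμ]

theorem stmt7_general {G E : Type*} [Group G] [TopologicalSpace G] [IsTopologicalGroup G]
    [MeasurableSpace G] [BorelSpace G]
    (ν : Measure G) [ν.IsHaarMeasure]
    [NormedAddCommGroup E] [NormedSpace ℂ E] [CompleteSpace E]
    (μ : G → E →L[ℂ] E)
    (hμcont : ∀ x : E, Continuous fun t => μ t x)
    (c : G → E →L[ℂ] ℂ) (hcw : ∀ x : E, Continuous fun t => c t x)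
    (hcoc : ∀ s t : G, c (s * t) = (c t).comp (μ s) + c s) :
    (∀ K : Set G, IsCompact K → ∃ C : ℝ, ∀ f : G → ℂ, Continuous f → tsupport f ⊆ K →
      ∀ x : E, ‖∫ t, f t * c t x ∂ν‖ ≤ C * (∫ t, ‖f t‖ ∂ν) * ‖x‖) ∧
    (∀ f g : G → ℂ, Continuous f → HasCompactSupport f →
      Continuous g → HasCompactSupport g → ∀ x : E,
      (∫ t, (∫ s, f s * g (s⁻¹ * t) ∂ν) * c t x ∂ν) =
        (∫ t, g t * c t (∫ s, f s • μ s x ∂ν) ∂ν)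
          + (∫ t, g t ∂ν) * (∫ t, f t * c t x ∂ν)) := by
  constructor
  · intro K hK
    obtain ⟨C, hC⟩ := hK.exists_bound_opNorm_of_continuous_apply hcw
    refine ⟨C, fun f hf hfK x ↦ ?_⟩
    have hfc : HasCompactSupport f := hK.of_isClosed_subset (isClosed_tsupport f) hfK
    exact norm_integral_mul_apply_le ν (hf.integrable_of_hasCompactSupport hfc)
      ((subset_tsupport f).trans hfK) hC x
  · intro f g hf hfc hg hgc x
    have hfμ := (hf.smul (hμcont x)).integrable_of_hasCompactSupport (μ := ν) hfc.smul_right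
    have hfcx := (hf.mul (hcw x)).integrable_of_hasCompactSupport (μ := ν) hfc.mul_right
    rw [integral_convolution_mul_eq ν hf hfc hg hgc (hcw x)]
    simp_rw [integral_mul_cocycle_apply ν hcoc hfμ hfcx, mul_add]
    rw [integral_add, integral_mul_const]
    · exact (hg.mul (hcw _)).integrable_of_hasCompactSupport hgc.mul_right
    · exact (hg.mul continuous_const).integrable_of_hasCompactSupport hgc.mul_right

/-- For a norm-continuous anti-representation `μ` of `G` on `E` with dual
representation `π(t) = μ(t)*`, and a weak*-continuous 1-cocycle `c : G → E*`, the map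
`I(c)(f)(x) = ∫ f(t) c(t)(x) dt` on `C_c(G)` is locally bounded and satisfies
`I(c)(f*g) = Φ̌(f) I(c)(g) + ε_G(g) I(c)(f)`. -/
theorem stmt7 {G E : Type*} [Group G] [TopologicalSpace G] [IsTopologicalGroup G]
    [LocallyCompactSpace G] [MeasurableSpace G] [BorelSpace G]
    (ν : Measure G) [ν.IsHaarMeasure]
    [NormedAddCommGroup E] [NormedSpace ℂ E] [CompleteSpace E]
    (μ : G → E →L[ℂ] E) (hμanti : ∀ s t : G, μ (s * t) = (μ t).comp (μ s)) (hμ1 : μ 1 = 1)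
    (hμcont : ∀ x : E, Continuous fun t => μ t x)
    (c : G → E →L[ℂ] ℂ) (hcw : ∀ x : E, Continuous fun t => c t x)
    (hcoc : ∀ s t : G, c (s * t) = (c t).comp (μ s) + c s) :
    (∀ K : Set G, IsCompact K → ∃ C : ℝ, ∀ f : G → ℂ, Continuous f → tsupport f ⊆ K →
      ∀ x : E, ‖∫ t, f t * c t x ∂ν‖ ≤ C * (∫ t, ‖f t‖ ∂ν) * ‖x‖) ∧
    (∀ f g : G → ℂ, Continuous f → HasCompactSupport f →
      Continuous g → HasCompactSupport g → ∀ x : E,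
      (∫ t, (∫ s, f s * g (s⁻¹ * t) ∂ν) * c t x ∂ν) =
        (∫ t, g t * c t (∫ s, f s • μ s x ∂ν) ∂ν)
          + (∫ t, g t ∂ν) * (∫ t, f t * c t x ∂ν)) :=
  stmt7_general ν μ hμcont c hcw hcoc
end

section
/- Let A be a commutative algebra, ε: A → ℂ a character, H a Hilbert space, ν: A → L(H) a representation with ker ν ⊄ ker ε, and θ: A → H a linear map satisfying θ(ab) = ν(a)θ(b) + ε(b)θ(a) for all a, b ∈ A. Then θ is inner: there exists ξ ∈ H with θ(a) = ε(a)ξ − ν(a)ξ for all a ∈ A. (One may take ξ = θ(x) for any x ∈ ker ν with ε(x) = 1.) -/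
open Filter Topology

/-- For a commutative algebra `A`, a character `ε`, a representation `ν` on a
Hilbert space with `ker ν ⊄ ker ε`, every `(ν, ε)`-derivation `θ` is inner. -/
theorem stmt10 {A H : Type*} [CommRing A] [Algebra ℂ A]
    [NormedAddCommGroup H] [InnerProductSpace ℂ H] [CompleteSpace H]
    (ε : A →ₗ[ℂ] ℂ) (hεm : ∀ a b : A, ε (a * b) = ε a * ε b) (hε0 : ε ≠ 0)
    (ν : A →ₗ[ℂ] (H →L[ℂ] H)) (hνm : ∀ a b : A, ν (a * b) = (ν a).comp (ν b))
    (hker : ¬ (LinearMap.ker ν ≤ LinearMap.ker ε))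
    (θ : A →ₗ[ℂ] H) (hθ : ∀ a b : A, θ (a * b) = ν a (θ b) + ε b • θ a) :
    ∃ ξ : H, ∀ a : A, θ a = ε a • ξ - ν a ξ := by
  obtain ⟨x, hx, hεx⟩ := Set.not_subset.mp hker
  simp only [SetLike.mem_coe, LinearMap.mem_ker] at hx hεx
  have hεx' : ε x ≠ 0 := hεx
  set y := (ε x)⁻¹ • x with hy
  have hνy : ν y = 0 := by simp [hy, hx]
  have hεy : ε y = 1 := by simp [hy, inv_mul_cancel₀ hεx']
  refine ⟨θ y, fun a => ?_⟩
  have h1 := hθ a y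
  have h2 := hθ y a
  rw [mul_comm] at h1
  rw [h1, hνy] at h2
  simp only [hεy, one_smul, ContinuousLinearMap.zero_apply] at h2
  -- h2 : ν a (θ y) + θ a = ε a • θ y ... check direction
  rw [zero_add] at h2
  rw [eq_sub_iff_add_eq, add_comm]
  exact h2
end

section
/- Let G be a compact group with normalized Haar measure. Let 1_G ∈ C(G) be the constant function 1 and {h_V} a standard approximate identity in C(G) for convolution. Then g_V := h_V − 1_G lies in C⁰_c(G) = {f ∈ C(G) : ∫ f = 0}, the net {g_V} is bounded in L¹-norm, and for every g ∈ C⁰_c(G) one has ‖g * g_V − g‖_{L¹} → 0 and ‖g_V * g − g‖_{L¹} → 0. In particular, the augmentation ideal C⁰_c(G) has a bounded two-sided approximate identity (for the L¹-norm). -/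
open Filter Topology MeasureTheory

/-!
Normalized Haar measure on a compact group is also right and inversion invariant (uniqueness of
Haar probability measures), so `∫ s, f (s⁻¹ * t) ∂μ = ∫ f`: this is `1_G * f = (∫ f) 1_G`.
Hence, for `g` of mean zero, replacing `h` by `h - 1_G` changes neither `g * h` nor `h * g`, and
both are averages of translates of `g` against the probability density `h`. A continuous
function on a compact group is uniformly continuous under translations, so once `h` is
supported close enough to `1` these averages are uniformly within `ε / 2` of `g`.
-/

theorem Continuous.integrable_of_compactSpace {X E : Type*} [TopologicalSpace X] [CompactSpace X]
    [MeasurableSpace X] [OpensMeasurableSpace X] {μ : Measure X} [IsFiniteMeasure μ]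
    [NormedAddCommGroup E] {f : X → E} (hf : Continuous f) : Integrable f μ :=
  hf.integrable_of_hasCompactSupport (.of_compactSpace f)

theorem Continuous.eventually_forall_dist_lt {X K E : Type*} [TopologicalSpace X]
    [TopologicalSpace K] [CompactSpace K] [PseudoMetricSpace E] {F : X → K → E}
    (hF : Continuous ↿F) (x : X) {δ : ℝ} (hδ : 0 < δ) :
    ∀ᶠ y in 𝓝 x, ∀ t, dist (F y t) (F x t) < δ := by
  have hdist : Continuous fun z : X × K => dist (F z.1 z.2) (F x z.2) :=
    hF.dist (hF.comp (continuous_const.prodMk continuous_snd))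
  simpa using isCompact_univ.eventually_forall_of_forall_eventually fun t _ =>
    hdist.continuousAt.eventually_lt continuousAt_const (by simpa using hδ)

section ProbabilityDensity

variable {α 𝕜 : Type*} [MeasurableSpace α] {μ : Measure α} [RCLike 𝕜] {k : α → ℝ}

theorem integral_ofReal_sub_one_eq_zero [IsProbabilityMeasure μ] (hk : Integrable k μ)
    (hk1 : ∫ s, k s ∂μ = 1) : ∫ s, ((k s : 𝕜) - 1) ∂μ = 0 := by
  rw [integral_sub hk.ofReal (integrable_const 1), integral_ofReal, hk1, integral_const]
  simp

theorem integral_norm_ofReal_sub_one_le_two [IsProbabilityMeasure μ] (hk : Integrable k μ)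
    (hk0 : ∀ s, 0 ≤ k s) (hk1 : ∫ s, k s ∂μ = 1) : ∫ s, ‖(k s : 𝕜) - 1‖ ∂μ ≤ 2 := by
  have hle : ∀ s, ‖(k s : 𝕜) - 1‖ ≤ k s + 1 := fun s =>
    (norm_sub_le _ _).trans_eq (by rw [RCLike.norm_ofReal, abs_of_nonneg (hk0 s), norm_one])
  calc ∫ s, ‖(k s : 𝕜) - 1‖ ∂μ ≤ ∫ s, (k s + 1) ∂μ :=
        integral_mono_of_nonneg (.of_forall fun _ => norm_nonneg _)
          (hk.add (integrable_const 1)) (.of_forall hle)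
    _ = 2 := by
        rw [integral_add hk (integrable_const 1), hk1, integral_const]
        norm_num

theorem norm_integral_ofReal_sub_one_mul_sub_le {f : α → 𝕜} {c : 𝕜} {δ : ℝ}
    (hk : Integrable k μ) (hk0 : ∀ s, 0 ≤ k s) (hk1 : ∫ s, k s ∂μ = 1) (hf : Integrable f μ)
    (hkf : Integrable (fun s => (k s : 𝕜) * f s) μ) (hf0 : ∫ s, f s ∂μ = 0)
    (hclose : ∀ s, k s ≠ 0 → ‖f s - c‖ ≤ δ) :
    ‖∫ s, ((k s : 𝕜) - 1) * f s ∂μ - c‖ ≤ δ := by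
  have hrw : ∫ s, ((k s : 𝕜) - 1) * f s ∂μ - c = ∫ s, (k s : 𝕜) * (f s - c) ∂μ := by
    simp_rw [sub_mul, one_mul, mul_sub]
    rw [integral_sub hkf hf, hf0, integral_sub hkf (hk.ofReal.mul_const c), integral_mul_const,
      integral_ofReal, hk1]
    simp
  have hpt : ∀ s, ‖(k s : 𝕜) * (f s - c)‖ ≤ k s * δ := fun s => by
    rcases eq_or_ne (k s) 0 with h0 | h0
    · simp [h0]
    · rw [norm_mul, RCLike.norm_ofReal, abs_of_nonneg (hk0 s)]
      exact mul_le_mul_of_nonneg_left (hclose s h0) (hk0 s)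
  calc ‖∫ s, ((k s : 𝕜) - 1) * f s ∂μ - c‖ ≤ ∫ s, k s * δ ∂μ :=
        hrw ▸ norm_integral_le_of_norm_le (hk.mul_const δ) (.of_forall hpt)
    _ = δ := by rw [integral_mul_const, hk1, one_mul]

theorem integral_norm_le_of_forall_norm_le [IsProbabilityMeasure μ] {E : Type*}
    [NormedAddCommGroup E] {F : α → E} {C : ℝ} (hF : ∀ x, ‖F x‖ ≤ C) : ∫ x, ‖F x‖ ∂μ ≤ C :=
  calc ∫ x, ‖F x‖ ∂μ ≤ ‖∫ x, ‖F x‖ ∂μ‖ := Real.le_norm_self _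
    _ ≤ C := by
        simpa using norm_integral_le_of_norm_le_const (μ := μ)
          (.of_forall fun x => (norm_norm (F x)).trans_le (hF x))

end ProbabilityDensity

theorem integral_inv_mul_eq_self {G E : Type*} [Group G] [MeasurableSpace G]
    [MeasurableMul G] [MeasurableInv G] [NormedAddCommGroup E] [NormedSpace ℝ E]
    (μ : Measure G) [μ.IsInvInvariant] [μ.IsMulRightInvariant] (f : G → E) (t : G) :
    ∫ s, f (s⁻¹ * t) ∂μ = ∫ s, f s ∂μ :=
  (integral_inv_eq_self (fun s => f (s * t)) μ).trans (integral_mul_right_eq_self f t)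

section CompactGroup

variable {G : Type*} [Group G] [TopologicalSpace G] [IsTopologicalGroup G] [CompactSpace G]

theorem Continuous.eventually_forall_norm_sub_lt {E : Type*} [SeminormedAddCommGroup E] {g : G → E}
    (hg : Continuous g) {δ : ℝ} (hδ : 0 < δ) :
    ∀ᶠ u in 𝓝 1, ∀ t, ‖g (t * u⁻¹) - g t‖ < δ ∧ ‖g (u⁻¹ * t) - g t‖ < δ := by
  have hright := Continuous.eventually_forall_dist_lt (F := fun u t => g (t * u⁻¹))
    (hg.comp (by fun_prop)) 1 hδ
  have hleft := Continuous.eventually_forall_dist_lt (F := fun u t => g (u⁻¹ * t))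
    (hg.comp (by fun_prop)) 1 hδ
  filter_upwards [hright, hleft] with u hright hleft t
  simp only [inv_one, mul_one, one_mul, dist_eq_norm] at hright hleft
  exact ⟨hright t, hleft t⟩

variable [MeasurableSpace G] [BorelSpace G] (μ : Measure G) [μ.IsHaarMeasure]
  [IsProbabilityMeasure μ]

instance Measure.IsHaarMeasure.isMulRightInvariant_of_isProbabilityMeasure :
    μ.IsMulRightInvariant := by
  have : LocallyCompactSpace G := isCompact_univ.locallyCompactSpace_of_mem_nhds_of_group
    (x := 1) univ_mem
  refine ⟨fun t => ?_⟩
  have : IsProbabilityMeasure (μ.map (· * t)) :=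
    Measure.isProbabilityMeasure_map (measurable_mul_const t).aemeasurable
  exact Measure.isHaarMeasure_eq_of_isProbabilityMeasure _ μ

instance Measure.IsHaarMeasure.isInvInvariant_of_isProbabilityMeasure : μ.IsInvInvariant := by
  have : LocallyCompactSpace G := isCompact_univ.locallyCompactSpace_of_mem_nhds_of_group
    (x := 1) univ_mem
  refine ⟨?_⟩
  have : IsProbabilityMeasure μ.inv := ⟨by simp [Measure.inv_apply]⟩
  have : μ.inv.IsHaarMeasure := ⟨⟩
  exact Measure.isHaarMeasure_eq_of_isProbabilityMeasure μ.inv μ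

end CompactGroup

/-- For a compact group `G` with normalized Haar measure, the functions
`g_V = h_V − 1` (for `h_V` a standard approximate identity) lie in the augmentation ideal
`C⁰_c(G) = {f : ∫ f = 0}`, are bounded in `L¹`-norm, and form a two-sided approximate identity
for `C⁰_c(G)` in `L¹`-norm. -/
theorem stmt13 {G : Type*} [Group G] [TopologicalSpace G] [IsTopologicalGroup G]
    [CompactSpace G] [MeasurableSpace G] [BorelSpace G]
    (μ : Measure G) [μ.IsHaarMeasure] [IsProbabilityMeasure μ]
    (g : G → ℂ) (hg : Continuous g) (hg0 : (∫ t, g t ∂μ) = 0) :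
    ∀ ε > (0 : ℝ), ∃ U ∈ nhds (1 : G), ∀ h : G → ℝ,
      Continuous h → (∀ t, 0 ≤ h t) → (∫ t, h t ∂μ) = 1 → tsupport h ⊆ U →
      (∫ t, ((h t : ℂ) - 1) ∂μ) = 0 ∧
      (∫ t, ‖(h t : ℂ) - 1‖ ∂μ) ≤ 2 ∧
      (∫ t, ‖(∫ s, g s * ((h (s⁻¹ * t) : ℂ) - 1) ∂μ) - g t‖ ∂μ) < ε ∧
      (∫ t, ‖(∫ s, ((h s : ℂ) - 1) * g (s⁻¹ * t) ∂μ) - g t‖ ∂μ) < ε := by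
  intro ε hε
  refine ⟨_, hg.eventually_forall_norm_sub_lt (half_pos hε), fun h hc hnn hint hsupp => ?_⟩
  have hclose : ∀ s, h s ≠ 0 → ∀ t, ‖g (t * s⁻¹) - g t‖ < ε / 2 ∧ ‖g (s⁻¹ * t) - g t‖ < ε / 2 :=
    fun s hs => hsupp (subset_tsupport h hs)
  have hh : Integrable h μ := hc.integrable_of_compactSpace
  refine ⟨integral_ofReal_sub_one_eq_zero hh hint, integral_norm_ofReal_sub_one_le_two hh hnn hint,
    ?_, ?_⟩
  · refine (integral_norm_le_of_forall_norm_le fun t => ?_).trans_lt (half_lt_self hε)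
    simp_rw [mul_comm (g _)]
    refine norm_integral_ofReal_sub_one_mul_sub_le (k := fun s => h (s⁻¹ * t))
      (hc.comp (by fun_prop)).integrable_of_compactSpace (fun s => hnn _)
      ((integral_inv_mul_eq_self μ h t).trans hint) hg.integrable_of_compactSpace
      (by fun_prop : Continuous _).integrable_of_compactSpace hg0 fun s hs => ?_
    simpa using ((hclose _ hs) t).1.le
  · refine (integral_norm_le_of_forall_norm_le fun t => ?_).trans_lt (half_lt_self hε)
    refine norm_integral_ofReal_sub_one_mul_sub_le hh hnn hint
      (hg.comp (by fun_prop)).integrable_of_compactSpace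
      (by fun_prop : Continuous _).integrable_of_compactSpace
      ((integral_inv_mul_eq_self μ g t).trans hg0) fun s hs => ((hclose s hs) t).2.le
end

section
/- Let G be a compact group acting continuously by affine maps on a non-empty closed convex subset C of a quasi-complete locally convex space X. Then the action has a fixed point in C. -/
/-!
Average the orbit `t ↦ γ t x₀` against the Haar probability measure of `G`. The closed convex
hull of the orbit is compact (quasi-completeness), so the orbit has a weak (Pettis) integral `x`
in it, obtained from Jensen's inequality for its images under finitely many functionals and a
finite intersection argument. Each `γ s` is continuous and affine on this hull, so it commutes
with the integral, and left invariance of Haar measure turns the integral of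
`t ↦ γ s (γ t x₀)` back into `x`.
-/

open MeasureTheory Measure Set

theorem IsCompact.isCompact_closedConvexHull {X : Type*} [AddCommGroup X] [Module ℝ X]
    [UniformSpace X] [IsUniformAddGroup X] [ContinuousSMul ℝ X] [LocallyConvexSpace ℝ X]
    (hqc : ∀ s : Set X, IsClosed s → Bornology.IsVonNBounded ℝ s → IsComplete s)
    {s : Set X} (hs : IsCompact s) : IsCompact (closedConvexHull ℝ s) := by
  have htb : TotallyBounded (closedConvexHull ℝ s) := by
    rw [closedConvexHull_eq_closure_convexHull]
    exact (totallyBounded_convexHull.2 hs.totallyBounded).closure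
  exact isCompact_iff_totallyBounded_isComplete.2
    ⟨htb, hqc _ isClosed_closedConvexHull (htb.isVonNBounded ℝ)⟩

section PettisIntegral

variable {G Y : Type*} [MeasurableSpace G] [AddCommGroup Y] [Module ℝ Y] [TopologicalSpace Y]

def IsPettisIntegral (μ : Measure G) (u : G → Y) (x : Y) : Prop :=
  ∀ f : StrongDual ℝ Y, f x = ∫ t, f (u t) ∂μ

variable {μ : Measure G} {u : G → Y} {x : Y}

theorem IsPettisIntegral.unique [SeparatingDual ℝ Y] {y : Y} (hx : IsPettisIntegral μ u x)
    (hy : IsPettisIntegral μ u y) : x = y :=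
  (SeparatingDual.eq_iff_forall_dual_eq (R := ℝ)).2 fun f => (hx f).trans (hy f).symm

theorem IsPettisIntegral.comp_mul_left [Group G] [MeasurableMul G] [IsMulLeftInvariant μ]
    (hx : IsPettisIntegral μ u x) (s : G) : IsPettisIntegral μ (fun t => u (s * t)) x :=
  fun f => (hx f).trans (integral_mul_left_eq_self (fun t => f (u t)) s).symm

variable [TopologicalSpace G] [CompactSpace G] [OpensMeasurableSpace G] [IsProbabilityMeasure μ]
  {K : Set Y}

theorem exists_mem_map_eq_integral {E : Type*} [NormedAddCommGroup E] [NormedSpace ℝ E]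
    [CompleteSpace E] (hK : IsCompact K) (hKconv : Convex ℝ K) (hu : Continuous u)
    (huK : ∀ t, u t ∈ K) (T : Y →L[ℝ] E) : ∃ x ∈ K, T x = ∫ t, T (u t) ∂μ :=
  (hKconv.linear_image T.toLinearMap).integral_mem (hK.image T.continuous).isClosed
    (ae_of_all _ fun t => mem_image_of_mem T (huK t))
    ((T.continuous.comp hu).integrable_of_hasCompactSupport (.of_compactSpace _))

theorem exists_isPettisIntegral_mem (hK : IsCompact K) (hKconv : Convex ℝ K)
    (hu : Continuous u) (huK : ∀ t, u t ∈ K) : ∃ x ∈ K, IsPettisIntegral μ u x := by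
  suffices (K ∩ ⋂ f : StrongDual ℝ Y, {x | f x = ∫ t, f (u t) ∂μ}).Nonempty by
    obtain ⟨x, hxK, hx⟩ := this
    exact ⟨x, hxK, fun f => mem_iInter.1 hx f⟩
  refine hK.inter_iInter_nonempty _ (fun f => isClosed_eq f.continuous continuous_const)
    fun F => ?_
  let T : Y →L[ℝ] (F → ℝ) := .pi fun f => f
  have hTu : Integrable (fun t => T (u t)) μ :=
    (T.continuous.comp hu).integrable_of_hasCompactSupport (.of_compactSpace _)
  obtain ⟨x, hxK, hx⟩ := exists_mem_map_eq_integral (μ := μ) hK hKconv hu huK T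
  refine ⟨x, hxK, mem_iInter₂.2 fun f hf => ?_⟩
  have hf_eq := congrFun hx ⟨f, hf⟩
  rwa [eval_integral hTu.eval] at hf_eq

theorem IsPettisIntegral.map_of_affineOn [SeparatingDual ℝ Y] {Z : Type*} [AddCommGroup Z]
    [Module ℝ Z] [TopologicalSpace Z] (hK : IsCompact K) (hKconv : Convex ℝ K)
    (hu : Continuous u) (huK : ∀ t, u t ∈ K) (hx : IsPettisIntegral μ u x) {ψ : Y → Z}
    (hψc : ContinuousOn ψ K)
    (hψ : ∀ y ∈ K, ∀ z ∈ K, ∀ a b : ℝ, 0 ≤ a → 0 ≤ b → a + b = 1 →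
      ψ (a • y + b • z) = a • ψ y + b • ψ z) :
    IsPettisIntegral μ (fun t => ψ (u t)) (ψ x) := by
  -- `ψ` is only affine on `K`, so we integrate the lift of `u` into the compact convex graph of `ψ`.
  set graph := (fun y => (y, ψ y)) '' K
  have hgraph : IsCompact graph := hK.image_of_continuousOn (continuousOn_id.prodMk hψc)
  have hgraph_conv : Convex ℝ graph := by
    rintro _ ⟨y, hy, rfl⟩ _ ⟨z, hz, rfl⟩ a b ha hb hab
    refine ⟨a • y + b • z, hKconv hy hz ha hb hab, ?_⟩
    simp [hψ y hy z hz a b ha hb hab]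
  obtain ⟨_, ⟨z, -, rfl⟩, hz⟩ := exists_isPettisIntegral_mem (μ := μ) hgraph hgraph_conv
    (hu.prodMk (hψc.comp_continuous hu huK)) fun t => mem_image_of_mem _ (huK t)
  obtain rfl : z = x :=
    IsPettisIntegral.unique (fun f => hz (f.comp (ContinuousLinearMap.fst ℝ Y Z))) hx
  exact fun g => hz (g.comp (ContinuousLinearMap.snd ℝ Y Z))

end PettisIntegral

theorem stmt15_general {G X : Type*} [Group G] [TopologicalSpace G] [IsTopologicalGroup G]
    [CompactSpace G]
    [AddCommGroup X] [Module ℝ X] [UniformSpace X] [IsUniformAddGroup X]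
    [ContinuousSMul ℝ X] [LocallyConvexSpace ℝ X] [T2Space X]
    (hqc : ∀ s : Set X, IsClosed s → Bornology.IsVonNBounded ℝ s → IsComplete s)
    (C : Set X) (hne : C.Nonempty) (hCcl : IsClosed C) (hCconv : Convex ℝ C)
    (γ : G → X → X) (hmaps : ∀ t : G, Set.MapsTo (γ t) C C)
    (haff : ∀ t : G, ∀ x ∈ C, ∀ y ∈ C, ∀ a b : ℝ, 0 ≤ a → 0 ≤ b → a + b = 1 →
      γ t (a • x + b • y) = a • γ t x + b • γ t y)
    (hact : ∀ s t : G, ∀ x ∈ C, γ (s * t) x = γ s (γ t x))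
    (hcont1 : ∀ t : G, ContinuousOn (γ t) C)
    (hcont2 : ∀ x ∈ C, Continuous fun t => γ t x) :
    ∃ x ∈ C, ∀ t : G, γ t x = x := by
  borelize G
  obtain ⟨x₀, hx₀⟩ := hne
  have : Nonempty G := ⟨1⟩
  let μ := haarMeasure (⊤ : TopologicalSpace.PositiveCompacts G)
  have : IsProbabilityMeasure μ := ⟨haarMeasure_self⟩
  set u : G → X := fun t => γ t x₀
  have hu : Continuous u := hcont2 x₀ hx₀
  set K := closedConvexHull ℝ (range u)
  have hK : IsCompact K := (isCompact_range hu).isCompact_closedConvexHull hqc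
  have hKC : K ⊆ C :=
    closedConvexHull_min (range_subset_iff.2 fun t => hmaps t hx₀) hCconv hCcl
  have huK : ∀ t, u t ∈ K := fun t => subset_closedConvexHull (mem_range_self t)
  obtain ⟨x, hxK, hx⟩ := exists_isPettisIntegral_mem (μ := μ) hK convex_closedConvexHull hu huK
  refine ⟨x, hKC hxK, fun s => ?_⟩
  have hγs : IsPettisIntegral μ (fun t => γ s (u t)) (γ s x) :=
    hx.map_of_affineOn hK convex_closedConvexHull hu huK ((hcont1 s).mono hKC)
      fun y hy z hz => haff s y (hKC hy) z (hKC hz)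
  have hus : IsPettisIntegral μ (fun t => γ s (u t)) x := by
    simpa only [u, hact s _ x₀ hx₀] using hx.comp_mul_left s
  exact hγs.unique hus

/-- A compact group acting continuously by affine maps on a non-empty closed
convex subset `C` of a quasi-complete locally convex space has a fixed point in `C`. -/
theorem stmt15 {G X : Type*} [Group G] [TopologicalSpace G] [IsTopologicalGroup G]
    [CompactSpace G]
    [AddCommGroup X] [Module ℝ X] [UniformSpace X] [IsUniformAddGroup X]
    [ContinuousSMul ℝ X] [LocallyConvexSpace ℝ X] [T2Space X]
    (hqc : ∀ s : Set X, IsClosed s → Bornology.IsVonNBounded ℝ s → IsComplete s)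
    (C : Set X) (hne : C.Nonempty) (hCcl : IsClosed C) (hCconv : Convex ℝ C)
    (γ : G → X → X) (hmaps : ∀ t : G, Set.MapsTo (γ t) C C)
    (haff : ∀ t : G, ∀ x ∈ C, ∀ y ∈ C, ∀ a b : ℝ, 0 ≤ a → 0 ≤ b → a + b = 1 →
      γ t (a • x + b • y) = a • γ t x + b • γ t y)
    (hact : ∀ s t : G, ∀ x ∈ C, γ (s * t) x = γ s (γ t x))
    (hone : ∀ x ∈ C, γ 1 x = x)
    (hcont1 : ∀ t : G, ContinuousOn (γ t) C)
    (hcont2 : ∀ x ∈ C, Continuous fun t => γ t x) :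
    ∃ x ∈ C, ∀ t : G, γ t x = x :=
  stmt15_general hqc C hne hCcl hCconv γ hmaps haff hact hcont1 hcont2
end

section
/- Let A be a *-algebra with a locally convex topology making it a locally convex *-algebra, ε: A → ℂ a continuous *-character, and suppose A has a bounded (two-sided) approximate identity {e_i}. Let Φ: A → L(H) be a continuous *-representation on a Hilbert space H and θ: A → H a continuous (Φ, ε)-derivation. Let H_Φ be the closure of Φ(A)H, P: H → H_Φ the orthogonal projection, and Φ₀ the non-degenerate subrepresentation on H_Φ. If there exists ξ₀ ∈ H_Φ with P(θ(a)) = ε(a)ξ₀ − Φ₀(a)ξ₀ for all a ∈ A, then θ itself is inner: there exists ξ ∈ H with θ(a) = ε(a)ξ − Φ(a)ξ for all a ∈ A. -/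
/-!
Let `P`, `Q` be the orthogonal projections onto the essential space `S = closure (span Φ(A)H)`
and onto `Sᗮ`. Since `Φ` is a `*`-representation, every `Φ a` annihilates `Sᗮ`, so `Φ a = Φ a P`;
and `Q` kills `Φ(A)θ(A) ⊆ S`, so `Qθ(ba) = ε(a) Qθ(b)`. Letting `b` run through the approximate
identity gives `Qθ(a) = ε(a) ξ₁` for a single vector `ξ₁`, and then also `Qθ(a) = ε(a) Qξ₁`.
The hypothesis on `ξ₀` says `Pθ(a) = ε(a) Pξ₀ − Φ(a) Pξ₀`, so `ξ = Pξ₀ + Qξ₁` works.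
-/

open Filter Topology

theorem exists_forall_eq_smul_of_tendsto_smul {ι A 𝕜 E : Type*} {l : Filter ι} [l.NeBot]
    [Field 𝕜] [AddCommGroup E] [Module 𝕜 E] [TopologicalSpace E] [T2Space E]
    [ContinuousConstSMul 𝕜 E] {ε : A → 𝕜} {f : A → E} {v : ι → E}
    (h : ∀ a, Tendsto (fun i => ε a • v i) l (𝓝 (f a))) : ∃ ξ, ∀ a, f a = ε a • ξ := by
  by_cases hε : ∃ a₀, ε a₀ ≠ 0
  · obtain ⟨a₀, ha₀⟩ := hε
    have hv : Tendsto v l (𝓝 ((ε a₀)⁻¹ • f a₀)) := by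
      simpa only [inv_smul_smul₀ ha₀] using (h a₀).const_smul (ε a₀)⁻¹
    exact ⟨_, fun a => tendsto_nhds_unique (h a) (hv.const_smul (ε a))⟩
  · push Not at hε
    refine ⟨0, fun a => tendsto_nhds_unique (h a) ?_⟩
    simp only [hε, zero_smul, tendsto_const_nhds]

section EssentialSpace

variable {A 𝕜 H : Type*} [RCLike 𝕜] [NormedAddCommGroup H] [InnerProductSpace 𝕜 H]

def essentialSpace (Φ : A → H →L[𝕜] H) : Submodule 𝕜 H :=
  (Submodule.span 𝕜 {y : H | ∃ (a : A) (x : H), y = Φ a x}).topologicalClosure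

theorem apply_mem_essentialSpace (Φ : A → H →L[𝕜] H) (a : A) (x : H) :
    Φ a x ∈ essentialSpace Φ :=
  Submodule.le_topologicalClosure _ (Submodule.subset_span ⟨a, x, rfl⟩)

variable [CompleteSpace H]

instance (Φ : A → H →L[𝕜] H) : CompleteSpace (essentialSpace Φ) :=
  Submodule.topologicalClosure.completeSpace _

theorem apply_eq_zero_of_mem_essentialSpace_orthogonal [Star A] {Φ : A → H →L[𝕜] H}
    (hΦs : ∀ a, Φ (star a) = ContinuousLinearMap.adjoint (Φ a)) (a : A) {η : H}
    (hη : η ∈ (essentialSpace Φ)ᗮ) : Φ a η = 0 := by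
  have h : inner 𝕜 (Φ (star a) (Φ a η)) η = 0 :=
    (Submodule.mem_orthogonal _ η).mp hη _ (apply_mem_essentialSpace Φ _ _)
  rwa [hΦs, ContinuousLinearMap.adjoint_inner_left, inner_self_eq_zero] at h

theorem apply_starProjection_essentialSpace [Star A] {Φ : A → H →L[𝕜] H}
    (hΦs : ∀ a, Φ (star a) = ContinuousLinearMap.adjoint (Φ a)) (a : A) (x : H) :
    Φ a ((essentialSpace Φ).starProjection x) = Φ a x := by
  conv_rhs => rw [← (essentialSpace Φ).starProjection_add_starProjection_orthogonal x]
  rw [map_add, apply_eq_zero_of_mem_essentialSpace_orthogonal hΦs a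
    ((essentialSpace Φ)ᗮ.starProjection_apply_mem x), add_zero]

theorem starProjection_orthogonal_essentialSpace_mul [Mul A] {Φ : A → H →L[𝕜] H}
    {ε : A → 𝕜} {θ : A → H} (hθ : ∀ a b, θ (a * b) = Φ a (θ b) + ε b • θ a) (a b : A) :
    (essentialSpace Φ)ᗮ.starProjection (θ (a * b)) =
      ε b • (essentialSpace Φ)ᗮ.starProjection (θ a) := by
  have h : (essentialSpace Φ)ᗮ.starProjection (Φ a (θ b)) = 0 :=
    (Submodule.starProjection_apply_eq_zero_iff _).mpr
      ((essentialSpace Φ).le_orthogonal_orthogonal (apply_mem_essentialSpace Φ a (θ b)))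
  rw [hθ, map_add, h, zero_add, map_smul]

end EssentialSpace

theorem stmt18_general {A H ι : Type*} [Ring A] [Algebra ℂ A] [StarRing A]
    [TopologicalSpace A]
    [NormedAddCommGroup H] [InnerProductSpace ℂ H] [CompleteSpace H]
    [Nonempty ι] [SemilatticeSup ι]
    (ε : A →ₗ[ℂ] ℂ)
    (e : ι → A)
    (heai : ∀ a : A, Tendsto (fun i => e i * a) atTop (nhds a) ∧
      Tendsto (fun i => a * e i) atTop (nhds a))
    (Φ : A →ₗ[ℂ] (H →L[ℂ] H))
    (hΦs : ∀ a : A, Φ (star a) = ContinuousLinearMap.adjoint (Φ a))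
    (θ : A →ₗ[ℂ] H) (hθc : Continuous θ)
    (hθ : ∀ a b : A, θ (a * b) = Φ a (θ b) + ε b • θ a)
    (S : Submodule ℂ H)
    (hS : S = (Submodule.span ℂ {y : H | ∃ (a : A) (x : H), y = Φ a x}).topologicalClosure)
    (ξ₀ : H)
    (hinner : ∀ a : A, θ a - (ε a • ξ₀ - Φ a ξ₀) ∈ Sᗮ) :
    ∃ ξ : H, ∀ a : A, θ a = ε a • ξ - Φ a ξ := by
  obtain rfl : S = essentialSpace Φ := hS
  set S := essentialSpace (⇑Φ)
  obtain ⟨ξ₁, hξ₁⟩ : ∃ ξ₁, ∀ a, Sᗮ.starProjection (θ a) = ε a • ξ₁ := by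
    exact exists_forall_eq_smul_of_tendsto_smul (l := atTop)
      (v := fun i => Sᗮ.starProjection (θ (e i))) fun a =>
      (((Sᗮ.starProjection.continuous.comp hθc).tendsto a).comp (heai a).1).congr
      fun i => starProjection_orthogonal_essentialSpace_mul hθ (e i) a
  have hQ : ∀ a, Sᗮ.starProjection (θ a) = ε a • Sᗮ.starProjection ξ₁ := fun a => by
    rw [← map_smul, ← hξ₁, Sᗮ.starProjection_eq_self_iff.mpr (Sᗮ.starProjection_apply_mem _)]
  have hP : ∀ a, S.starProjection (θ a) = ε a • S.starProjection ξ₀ - Φ a ξ₀ := fun a => by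
    have h := (S.starProjection_apply_eq_zero_iff).mpr (hinner a)
    rwa [map_sub, map_sub, map_smul, S.starProjection_eq_self_iff.mpr
      (apply_mem_essentialSpace Φ a ξ₀), sub_eq_zero] at h
  refine ⟨S.starProjection ξ₀ + Sᗮ.starProjection ξ₁, fun a => ?_⟩
  rw [← S.starProjection_add_starProjection_orthogonal (θ a), hP, hQ, map_add,
    apply_starProjection_essentialSpace hΦs,
    apply_eq_zero_of_mem_essentialSpace_orthogonal hΦs a (Sᗮ.starProjection_apply_mem _)]
  module

/-- Let `A` be a locally convex `*`-algebra with a bounded approximate identity,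
`ε` a continuous `*`-character, `Φ` a continuous `*`-representation on a Hilbert space `H`,
`θ` a continuous `(Φ, ε)`-derivation, `S = closure(span Φ(A)H)`. If there is `ξ₀ ∈ S` with
`P(θ a) = ε(a)ξ₀ − Φ(a)ξ₀` for all `a` (i.e. `θ a − (ε(a)ξ₀ − Φ(a)ξ₀) ⊥ S`), then `θ` is
inner. -/
theorem stmt18 {A H ι : Type*} [Ring A] [Algebra ℂ A] [StarRing A] [StarModule ℂ A]
    [TopologicalSpace A] [IsTopologicalAddGroup A] [ContinuousSMul ℂ A]
    [NormedAddCommGroup H] [InnerProductSpace ℂ H] [CompleteSpace H]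
    [Nonempty ι] [SemilatticeSup ι]
    (ε : A →ₗ[ℂ] ℂ) (hεc : Continuous ε) (hεm : ∀ a b : A, ε (a * b) = ε a * ε b)
    (hεs : ∀ a : A, ε (star a) = (starRingEnd ℂ) (ε a)) (hε0 : ε ≠ 0)
    (e : ι → A) (hebdd : Bornology.IsVonNBounded ℂ (Set.range e))
    (heai : ∀ a : A, Tendsto (fun i => e i * a) atTop (nhds a) ∧
      Tendsto (fun i => a * e i) atTop (nhds a))
    (Φ : A →ₗ[ℂ] (H →L[ℂ] H)) (hΦc : Continuous fun a => Φ a)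
    (hΦm : ∀ a b : A, Φ (a * b) = (Φ a).comp (Φ b))
    (hΦs : ∀ a : A, Φ (star a) = ContinuousLinearMap.adjoint (Φ a))
    (θ : A →ₗ[ℂ] H) (hθc : Continuous θ)
    (hθ : ∀ a b : A, θ (a * b) = Φ a (θ b) + ε b • θ a)
    (S : Submodule ℂ H)
    (hS : S = (Submodule.span ℂ {y : H | ∃ (a : A) (x : H), y = Φ a x}).topologicalClosure)
    (ξ₀ : H) (hξ₀ : ξ₀ ∈ S)
    (hinner : ∀ a : A, θ a - (ε a • ξ₀ - Φ a ξ₀) ∈ Sᗮ) :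
    ∃ ξ : H, ∀ a : A, θ a = ε a • ξ - Φ a ξ :=
  stmt18_general ε e heai Φ hΦs θ hθc hθ S hS ξ₀ hinner
end
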